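/- arXiv:2403.09649 — 7 statements merged into one kernel-verified Lean document; each statement's English description precedes it below -/
import Mathlib

section
/- For every real number p > 1, the integral ∫₀¹ (1 − t^p)^(−1/p) dt equals π/(p·sin(π/p)); i.e., arcsinₚ(1) = πₚ/2. -/
open Real

/-- The generalized inverse sine: `arcsinp p y = ∫₀^y (1 - t^p)^(-1/p) dt`. -/
noncomputable def arcsinp (p y : ℝ) : ℝ := ∫ t in (0:ℝ)..y, (1 - t ^ p) ^ (-1 / p)

open MeasureTheory intervalIntegral in
lemma beta_value (p : ℝ) (hp : 1 < p) :
    (∫ u in (0:ℝ)..1, u ^ (1/p - 1) * (1 - u) ^ (-1/p)) = π / Real.sin (π / p) := by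
  have hp0 : 0 < p := lt_trans one_pos hp
  have h1p : 0 < 1 / p := by positivity
  have h1p' : (0:ℝ) < 1 - 1/p := by
    rw [sub_pos, div_lt_one hp0]; exact hp
  -- identify the complex beta integral with the real one
  have hbeta : Complex.betaIntegral (1/p) (1 - 1/p)
      = ((∫ u in (0:ℝ)..1, u ^ (1/p - 1) * (1 - u) ^ (-1/p) : ℝ) : ℂ) := by
    rw [Complex.betaIntegral, ← intervalIntegral.integral_ofReal]
    rw [intervalIntegral.integral_of_le zero_le_one,
        intervalIntegral.integral_of_le zero_le_one]
    refine setIntegral_congr_fun measurableSet_Ioc (fun x hx => ?_) 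
    have hx0 : (0:ℝ) ≤ x := le_of_lt hx.1
    have hx1 : (0:ℝ) ≤ 1 - x := by linarith [hx.2]
    push_cast
    rw [Complex.ofReal_cpow hx0, Complex.ofReal_cpow hx1]
    push_cast
    ring_nf
  have hs : 0 < Complex.re (1/p : ℂ) := by
    simpa using h1p
  have ht : 0 < Complex.re (1 - 1/p : ℂ) := by
    simpa using h1p'
  have hG := Complex.Gamma_mul_Gamma_eq_betaIntegral hs ht
  have hsum : (1/p : ℂ) + (1 - 1/p) = 1 := by ring
  rw [hsum, Complex.Gamma_one, one_mul] at hG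
  have hrefl := Complex.Gamma_mul_Gamma_one_sub (1/p : ℂ)
  rw [hrefl, mul_one_div, hbeta] at hG
  have : ((∫ u in (0:ℝ)..1, u ^ (1/p - 1) * (1 - u) ^ (-1/p) : ℝ) : ℂ)
      = ((π / Real.sin (π / p) : ℝ) : ℂ) := by
    rw [← hG]
    push_cast [Complex.ofReal_sin]
    rfl
  exact_mod_cast this

open MeasureTheory in
/-- For `p > 1`, `arcsinₚ(1) = π / (p sin(π/p)) = πₚ/2`. -/
theorem arcsinp_one (p : ℝ) (hp : 1 < p) :
    arcsinp p 1 = Real.pi / (p * Real.sin (Real.pi / p)) := by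
  have hp0 : 0 < p := lt_trans one_pos hp
  set g : ℝ → ℝ := fun u => u ^ (1/p - 1) * (1 - u) ^ (-1/p) with hg
  have key := MeasureTheory.integral_comp_rpow_Ioi ((Set.Ioo (0:ℝ) 1).indicator g) hp0.ne'
  -- rewrite RHS of key
  have hRHS : (∫ x in Set.Ioi (0:ℝ), (Set.Ioo (0:ℝ) 1).indicator g x)
      = ∫ u in (0:ℝ)..1, g u := by
    rw [setIntegral_indicator measurableSet_Ioo]
    have : Set.Ioi (0:ℝ) ∩ Set.Ioo 0 1 = Set.Ioo 0 1 := by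
      ext x; simp (config := {contextual := true}) [and_assoc]
    rw [this, intervalIntegral.integral_of_le zero_le_one, integral_Ioc_eq_integral_Ioo]
  -- rewrite LHS of key
  have hLHS : (∫ x in Set.Ioi (0:ℝ),
        (|p| * x ^ (p - 1)) • (Set.Ioo (0:ℝ) 1).indicator g (x ^ p))
      = ∫ x in Set.Ioi (0:ℝ), (Set.Ioo (0:ℝ) 1).indicator
          (fun x => p * (1 - x ^ p) ^ (-1/p)) x := by
    refine setIntegral_congr_fun measurableSet_Ioi (fun x hx => ?_)
    have hx0 : (0:ℝ) < x := hx
    by_cases hx1 : x < 1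
    · have hmem : x ^ p ∈ Set.Ioo (0:ℝ) 1 :=
        Set.mem_Ioo.mpr ⟨Real.rpow_pos_of_pos hx0 p, Real.rpow_lt_one hx0.le hx1 hp0⟩
      rw [Set.indicator_of_mem hmem,
        Set.indicator_of_mem (Set.mem_Ioo.mpr ⟨hx0, hx1⟩)]
      simp only [hg, smul_eq_mul]
      have hxp : (x ^ p) ^ (1/p - 1) = x ^ (1 - p) := by
        rw [← Real.rpow_mul hx0.le]
        congr 1
        field_simp
      rw [hxp, abs_of_pos hp0]
      have : x ^ (p - 1) * x ^ (1 - p) = 1 := by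
        rw [← Real.rpow_add hx0]; norm_num
      calc p * x ^ (p - 1) * (x ^ (1 - p) * (1 - x ^ p) ^ (-1/p))
          = p * (x ^ (p - 1) * x ^ (1 - p)) * (1 - x ^ p) ^ (-1/p) := by ring
        _ = p * (1 - x ^ p) ^ (-1/p) := by rw [this, mul_one]
    · have h1x : (1:ℝ) ≤ x := not_lt.mp hx1
      have hmem : x ^ p ∉ Set.Ioo (0:ℝ) 1 := by
        intro h
        exact absurd h.2 (not_lt.mpr (Real.one_le_rpow h1x hp0.le))
      rw [Set.indicator_of_notMem hmem, Set.indicator_of_notMem (by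
        intro h; exact absurd (Set.mem_Ioo.mp h).2 (not_lt.mpr h1x))]
      rw [smul_zero]
  rw [hLHS, hRHS] at key
  have hLHS2 : (∫ x in Set.Ioi (0:ℝ), (Set.Ioo (0:ℝ) 1).indicator
        (fun x => p * (1 - x ^ p) ^ (-1/p)) x)
      = p * arcsinp p 1 := by
    rw [setIntegral_indicator measurableSet_Ioo]
    have : Set.Ioi (0:ℝ) ∩ Set.Ioo 0 1 = Set.Ioo 0 1 := by
      ext x; simp (config := {contextual := true}) [and_assoc]
    rw [this, arcsinp, intervalIntegral.integral_of_le zero_le_one,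
        integral_Ioc_eq_integral_Ioo, ← integral_const_mul]
  rw [hLHS2] at key
  have hbeta := beta_value p hp
  rw [hbeta] at key
  calc arcsinp p 1 = (p * arcsinp p 1) / p := by field_simp
    _ = (π / Real.sin (π / p)) / p := by rw [key]
    _ = π / (p * Real.sin (π / p)) := by rw [div_div, mul_comm]
end

section
/- For every real number p > 1, the function y ↦ arcsinₚ(y)·(1 − y^p)^(1/p)/y is strictly decreasing on (0, 1). (Under the substitution y = sinₚ(x), this says that x ↦ x/tanₚ(x) is strictly decreasing on (0, πₚ/2).) -/
open Real

lemma continuousOn_integrand (p : ℝ) (hp : 1 < p) {s : Set ℝ}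
    (hs : ∀ t ∈ s, 0 ≤ t ∧ t ^ p < 1) :
    ContinuousOn (fun t : ℝ => (1 - t ^ p) ^ (-1 / p)) s := by
  apply ContinuousOn.rpow_const
  · exact (continuousOn_const.sub (continuousOn_id.rpow_const
      (fun t _ => Or.inr (by positivity))))
  · intro t ht
    exact Or.inl (by have := (hs t ht).2; linarith)

lemma integrable_integrand (p : ℝ) (hp : 1 < p) {y : ℝ} (hy0 : 0 < y) (hy1 : y < 1) :
    IntervalIntegrable (fun t : ℝ => (1 - t ^ p) ^ (-1 / p)) MeasureTheory.volume 0 y := by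
  apply ContinuousOn.intervalIntegrable
  rw [Set.uIcc_of_le hy0.le]
  apply continuousOn_integrand p hp
  intro t ht
  refine ⟨ht.1, ?_⟩
  calc t ^ p ≤ y ^ p := Real.rpow_le_rpow ht.1 ht.2 (by linarith)
    _ < 1 := Real.rpow_lt_one hy0.le hy1 (by linarith)

lemma hasDerivAt_arcsinp (p : ℝ) (hp : 1 < p) {y : ℝ} (hy0 : 0 < y) (hy1 : y < 1) :
    HasDerivAt (arcsinp p) ((1 - y ^ p) ^ (-1 / p)) y := by
  have hcont : ContinuousOn (fun t : ℝ => (1 - t ^ p) ^ (-1 / p)) (Set.Ioo 0 1) := by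
    apply continuousOn_integrand p hp
    intro t ht
    exact ⟨ht.1.le, Real.rpow_lt_one ht.1.le ht.2 (by linarith)⟩
  exact intervalIntegral.integral_hasDerivAt_right
    (integrable_integrand p hp hy0 hy1)
    (hcont.stronglyMeasurableAtFilter isOpen_Ioo y ⟨hy0, hy1⟩)
    (hcont.continuousAt (isOpen_Ioo.mem_nhds ⟨hy0, hy1⟩))

lemma le_arcsinp (p : ℝ) (hp : 1 < p) {y : ℝ} (hy0 : 0 < y) (hy1 : y < 1) :
    y ≤ arcsinp p y := by
  have h := intervalIntegral.integral_mono_on (μ := MeasureTheory.volume) hy0.le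
    (intervalIntegrable_const (c := (1:ℝ))) (integrable_integrand p hp hy0 hy1)
    (fun t ht => by
      have htp1 : t ^ p < 1 := by
        calc t ^ p ≤ y ^ p := Real.rpow_le_rpow ht.1 ht.2 (by linarith)
          _ < 1 := Real.rpow_lt_one hy0.le hy1 (by linarith)
      have htp0 : 0 ≤ t ^ p := Real.rpow_nonneg ht.1 p
      have hip : (0:ℝ) < 1 / p := by positivity
      exact Real.one_le_rpow_of_pos_of_le_one_of_nonpos (by linarith) (by linarith)
        (by rw [neg_div]; linarith))
  simpa [arcsinp] using h

/-- For `p > 1`, the function `y ↦ arcsinₚ(y)·(1 − y^p)^(1/p)/y` is strictly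
decreasing on `(0, 1)`; i.e. `x ↦ x / tanₚ x` is strictly decreasing on `(0, πₚ/2)`. -/
theorem strictAntiOn_arcsinp_div_tanp (p : ℝ) (hp : 1 < p) :
    StrictAntiOn (fun y : ℝ => arcsinp p y * (1 - y ^ p) ^ (1 / p) / y)
      (Set.Ioo 0 1) := by
  have hp0 : p ≠ 0 := by positivity
  -- derivative of the whole function at each point of Ioo 0 1
  have hmain : ∀ y ∈ Set.Ioo (0:ℝ) 1,
      HasDerivAt (fun y : ℝ => arcsinp p y * (1 - y ^ p) ^ (1 / p) / y)
        ((((1 - y ^ p) ^ (-1 / p) * (1 - y ^ p) ^ (1 / p)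
          + arcsinp p y * (-(p * y ^ (p - 1)) * (1 / p) * (1 - y ^ p) ^ (1 / p - 1))) * y
          - arcsinp p y * (1 - y ^ p) ^ (1 / p) * 1) / y ^ 2) y := by
    intro y hy
    obtain ⟨hy0, hy1⟩ := hy
    have hu : 0 < 1 - y ^ p := by
      have := Real.rpow_lt_one (z := p) hy0.le hy1 (by linarith)
      linarith
    have hA := hasDerivAt_arcsinp p hp hy0 hy1
    have hinner : HasDerivAt (fun y : ℝ => 1 - y ^ p) (-(p * y ^ (p - 1))) y := by
      simpa using (Real.hasDerivAt_rpow_const (Or.inl hy0.ne')).const_sub (1:ℝ)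
    have hc : HasDerivAt (fun y : ℝ => (1 - y ^ p) ^ (1 / p))
        (-(p * y ^ (p - 1)) * (1 / p) * (1 - y ^ p) ^ (1 / p - 1)) y :=
      hinner.rpow_const (Or.inl hu.ne')
    exact (hA.mul hc).div (hasDerivAt_id y) hy0.ne'
  apply strictAntiOn_of_deriv_neg (convex_Ioo 0 1)
  · intro y hy
    exact ((hmain y hy).differentiableAt).continuousAt.continuousWithinAt
  · rw [interior_Ioo]
    intro y hy
    rw [(hmain y hy).deriv]
    obtain ⟨hy0, hy1⟩ := hy
    have hyp1 : y ^ p < 1 := Real.rpow_lt_one hy0.le hy1 (by linarith)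
    have hyp0 : 0 < y ^ p := Real.rpow_pos_of_pos hy0 p
    have hu : 0 < 1 - y ^ p := by linarith
    apply div_neg_of_neg_of_pos _ (by positivity)
    have h1 : (1 - y ^ p) ^ (-1 / p) * (1 - y ^ p) ^ (1 / p) = 1 := by
      rw [← Real.rpow_add hu, show -1/p + 1/p = 0 by ring, Real.rpow_zero]
    have h2 : (1 - y ^ p) ^ (1 / p) = (1 - y ^ p) * (1 - y ^ p) ^ (1 / p - 1) := by
      rw [show (1:ℝ)/p = 1 + (1/p - 1) by ring, Real.rpow_add hu, Real.rpow_one]; ring_nf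
    rw [h1, h2]
    set k := (1 - y ^ p) ^ (1 / p - 1) with hk
    set A := arcsinp p y with hA
    have hb : y ^ (p - 1) * y = y ^ p := by
      rw [← Real.rpow_add_one hy0.ne', show p - 1 + 1 = p by ring]
    have hk1 : 1 < k := Real.one_lt_rpow_of_pos_of_lt_one_of_neg hu (by linarith)
      (by rw [div_sub_one hp0]; exact div_neg_of_neg_of_pos (by linarith) (by linarith))
    have hAy : y ≤ A := le_arcsinp p hp hy0 hy1
    have key : y < A * k := by nlinarith
    have hE : (1 + A * (-(p * y ^ (p - 1)) * (1 / p) * k)) * y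
        - A * ((1 - y ^ p) * k) * 1 = y - A * k := by
      rw [← hb]
      field_simp
      ring
    rw [hE]
    linarith
end

section
/- For every real number p > 1, the function y ↦ arcsinhₚ(y)·(1 + y^p)^(1/p)/y is strictly increasing on (0, ∞). (Under the substitution y = sinhₚ(x), this says that x ↦ x/tanhₚ(x) is strictly increasing for x > 0.) -/
open Real

/-- The generalized inverse hyperbolic sine: `arcsinhp p y = ∫₀^y (1 + t^p)^(-1/p) dt`. -/
noncomputable def arcsinhp (p y : ℝ) : ℝ := ∫ t in (0:ℝ)..y, (1 + t ^ p) ^ (-1 / p)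

lemma arcsinhp_cont_at (p : ℝ) (hp0 : 0 < p) {t : ℝ} (ht : 0 ≤ t) :
    ContinuousAt (fun t : ℝ => (1 + t ^ p) ^ (-1 / p)) t := by
  have h1 : (0:ℝ) < 1 + t ^ p := by
    have := Real.rpow_nonneg ht p
    linarith
  have hb : ContinuousAt (fun t : ℝ => 1 + t ^ p) t :=
    continuousAt_const.add (Real.continuousAt_rpow_const t p (Or.inr hp0.le))
  exact hb.rpow_const (Or.inl h1.ne')

/-- For `p > 1`, the function `y ↦ arcsinhₚ(y)·(1 + y^p)^(1/p)/y` is strictly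
increasing on `(0, ∞)`; i.e. `x ↦ x / tanhₚ x` is strictly increasing for `x > 0`. -/
theorem strictMonoOn_arcsinhp_div_tanhp (p : ℝ) (hp : 1 < p) :
    StrictMonoOn (fun y : ℝ => arcsinhp p y * (1 + y ^ p) ^ (1 / p) / y)
      (Set.Ioi 0) := by
  have hp0 : 0 < p := lt_trans one_pos hp
  -- pointwise derivative and its positivity
  have key : ∀ y ∈ Set.Ioi (0:ℝ),
      ∃ D : ℝ, HasDerivAt (fun y : ℝ => arcsinhp p y * (1 + y ^ p) ^ (1 / p) / y) D y
        ∧ 0 < D := by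
    intro y hy
    rw [Set.mem_Ioi] at hy
    set B : ℝ := 1 + y ^ p with hBdef
    have hyp : (0:ℝ) < y ^ p := Real.rpow_pos_of_pos hy p
    have hB : (0:ℝ) < B := by simp only [hBdef]; linarith
    have hB1 : (1:ℝ) < B := by simp only [hBdef]; linarith
    -- integrability of the integrand on [0, y]
    have hconton : ContinuousOn (fun t : ℝ => (1 + t ^ p) ^ (-1 / p)) (Set.Icc 0 y) :=
      fun t ht => (arcsinhp_cont_at p hp0 ht.1).continuousWithinAt
    have hint : IntervalIntegrable (fun t : ℝ => (1 + t ^ p) ^ (-1 / p))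
        MeasureTheory.volume 0 y := by
      apply ContinuousOn.intervalIntegrable
      rwa [Set.uIcc_of_le hy.le]
    -- derivative of arcsinhp
    have hA : HasDerivAt (arcsinhp p) (B ^ (-1 / p)) y := by
      have hmeas : StronglyMeasurableAtFilter (fun t : ℝ => (1 + t ^ p) ^ (-1 / p))
          (nhds y) MeasureTheory.volume := by
        refine ContinuousOn.stronglyMeasurableAtFilter isOpen_Ioi ?_ y hy
        exact fun t ht => (arcsinhp_cont_at p hp0 (le_of_lt ht)).continuousWithinAt
      exact intervalIntegral.integral_hasDerivAt_right hint hmeas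
        (arcsinhp_cont_at p hp0 hy.le)
    -- derivative of (1 + y^p)^(1/p)
    have hBp : HasDerivAt (fun y : ℝ => 1 + y ^ p) (p * y ^ (p - 1)) y := by
      simpa using (Real.hasDerivAt_rpow_const (p := p) (Or.inl hy.ne'))
    have hc : HasDerivAt (fun y : ℝ => (1 + y ^ p) ^ (1 / p))
        (p * y ^ (p - 1) * (1 / p) * B ^ (1 / p - 1)) y :=
      hBp.rpow_const (Or.inl hB.ne')
    -- derivative of the whole function
    have hnum : HasDerivAt (fun y : ℝ => arcsinhp p y * (1 + y ^ p) ^ (1 / p))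
        (B ^ (-1 / p) * B ^ (1 / p) + arcsinhp p y * (p * y ^ (p - 1) * (1 / p) * B ^ (1 / p - 1))) y :=
      hA.mul hc
    have hf : HasDerivAt (fun y : ℝ => arcsinhp p y * (1 + y ^ p) ^ (1 / p) / y)
        (((B ^ (-1 / p) * B ^ (1 / p) + arcsinhp p y * (p * y ^ (p - 1) * (1 / p) * B ^ (1 / p - 1))) * y
          - arcsinhp p y * B ^ (1 / p) * 1) / y ^ 2) y :=
      hnum.div (hasDerivAt_id y) hy.ne'
    refine ⟨_, hf, ?_⟩
    -- positivity of the derivative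
    set A : ℝ := arcsinhp p y with hAdef
    have hApos : 0 < A := by
      rw [hAdef, arcsinhp]
      apply intervalIntegral.intervalIntegral_pos_of_pos_on hint _ hy
      intro t ht
      have h1 : (0:ℝ) < 1 + t ^ p := by
        have := Real.rpow_nonneg ht.1.le p; linarith
      exact Real.rpow_pos_of_pos h1 _
    have hAle : A ≤ y := by
      rw [hAdef, arcsinhp]
      calc (∫ t in (0:ℝ)..y, (1 + t ^ p) ^ (-1 / p))
          ≤ ∫ _ in (0:ℝ)..y, (1:ℝ) := by
            apply intervalIntegral.integral_mono_on hy.le hint intervalIntegrable_const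
            intro t ht
            apply Real.rpow_le_one_of_one_le_of_nonpos
            · have := Real.rpow_nonneg ht.1 p; linarith
            · exact div_nonpos_of_nonpos_of_nonneg (by norm_num) hp0.le
        _ = y := by simp
    have hBlt : B ^ (1 / p - 1) < 1 := by
      apply Real.rpow_lt_one_of_one_lt_of_neg hB1
      have h1 : 1 / p < 1 := by
        rw [div_lt_one hp0]; exact hp
      linarith
    have hBpow : B ^ (-1 / p) * B ^ (1 / p) = 1 := by
      rw [← Real.rpow_add hB]; norm_num [neg_div]
    have hyp1 : y ^ (p - 1) * y = y ^ p := by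
      rw [← Real.rpow_add_one hy.ne']; norm_num
    have hc1 : B ^ (1 / p) = B ^ (1 / p - 1) * B := by
      rw [← Real.rpow_add_one hB.ne']
      ring_nf
    -- numerator = y - A * B^(1/p-1) > 0
    have hnumpos : 0 < (B ^ (-1 / p) * B ^ (1 / p) + A * (p * y ^ (p - 1) * (1 / p) * B ^ (1 / p - 1))) * y
        - A * B ^ (1 / p) * 1 := by
      have hsimp : p * y ^ (p - 1) * (1 / p) = y ^ (p - 1) := by field_simp
      have heq : (B ^ (-1 / p) * B ^ (1 / p) + A * (p * y ^ (p - 1) * (1 / p) * B ^ (1 / p - 1))) * y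
          - A * B ^ (1 / p) * 1 = y - A * B ^ (1 / p - 1) := by
        rw [hBpow, hc1, hsimp]
        linear_combination A * B ^ (1 / p - 1) * hyp1 - A * B ^ (1 / p - 1) * hBdef
      rw [heq]
      have : A * B ^ (1 / p - 1) < y := by
        calc A * B ^ (1 / p - 1) < A * 1 := by
              exact mul_lt_mul_of_pos_left hBlt hApos
          _ ≤ y := by simpa using hAle
      linarith
    positivity
  -- conclude strict monotonicity from positive derivative
  apply strictMonoOn_of_deriv_pos (convex_Ioi 0)
  · intro y hy
    obtain ⟨D, hD, _⟩ := key y hy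
    exact hD.continuousAt.continuousWithinAt
  · intro y hy
    rw [interior_Ioi] at hy
    obtain ⟨D, hD, hDpos⟩ := key y hy
    rwa [hD.deriv]
end

section
/- Let p > 1 be a real number, fix y₀ ∈ (0, 1), and set a = arcsinₚ(y₀), α₁ = ln((1 − y₀^p)^(1/p))/a^p and β₁ = −1/p. Then for every y ∈ (0, y₀), writing x = arcsinₚ(y), one has exp(α₁·x^p) < (1 − y^p)^(1/p) < exp(β₁·x^p). (This is the double inequality exp(α₁ x^p) < cosₚ(x) < exp(β₁ x^p) for x ∈ (0, a), a < πₚ/2, with α₁ = ln(cosₚ a)/a^p.) -/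
open Real Set MeasureTheory Filter

namespace EBC

variable {p : ℝ}

noncomputable def H (p y : ℝ) : ℝ := -Real.log (1 - y ^ p)

noncomputable def W (p y : ℝ) : ℝ :=
  H p y * (1 - y ^ p) ^ ((p - 1) / p) * y ^ (1 - p)

lemma tp_lt_one (hp : 1 < p) {t : ℝ} (h0 : 0 ≤ t) (h1 : t < 1) : t ^ p < 1 :=
  Real.rpow_lt_one h0 h1 (by linarith)

lemma u_pos (hp : 1 < p) {t : ℝ} (h0 : 0 ≤ t) (h1 : t < 1) : 0 < 1 - t ^ p := by
  have := tp_lt_one hp h0 h1; linarith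

lemma tp_pos (hp : 1 < p) {t : ℝ} (h0 : 0 < t) : 0 < t ^ p :=
  Real.rpow_pos_of_pos h0 p

/-- key scalar inequality `H y > y^p`  -/
lemma h_gt (hp : 1 < p) {y : ℝ} (hy : y ∈ Ioo (0:ℝ) 1) : y ^ p < H p y := by
  have hu := u_pos hp hy.1.le hy.2
  have h1 := Real.log_lt_sub_one_of_pos hu
    (by have := tp_pos hp hy.1; intro h; linarith)
  unfold H; linarith

lemma h_pos (hp : 1 < p) {y : ℝ} (hy : y ∈ Ioo (0:ℝ) 1) : 0 < H p y :=
  lt_trans (tp_pos hp hy.1) (h_gt hp hy)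

/-- `H y ≤ y^p / (1 - y^p)` -/
lemma h_le (hp : 1 < p) {y : ℝ} (hy : y ∈ Ioo (0:ℝ) 1) : H p y ≤ y ^ p / (1 - y ^ p) := by
  have hu := u_pos hp hy.1.le hy.2
  have h1 := Real.log_le_sub_one_of_pos (show (0:ℝ) < (1 - y ^ p)⁻¹ by positivity)
  rw [Real.log_inv] at h1
  unfold H
  rw [div_eq_mul_inv]
  nlinarith [mul_pos hu (show (0:ℝ) < (1-y^p)⁻¹ by positivity), mul_inv_cancel₀ (ne_of_gt hu)]

/-- key scalar inequality `H y * (1 - y^p) < y^p` -/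
lemma key (hp : 1 < p) {y : ℝ} (hy : y ∈ Ioo (0:ℝ) 1) : H p y * (1 - y ^ p) < y ^ p := by
  have hu := u_pos hp hy.1.le hy.2
  have h1 := Real.log_lt_sub_one_of_pos (show (0:ℝ) < (1 - y ^ p)⁻¹ by positivity)
    (by have := tp_pos hp hy.1; intro h; field_simp at h; linarith)
  rw [Real.log_inv] at h1
  unfold H
  have h3 : (1 - y ^ p) * ((1 - y ^ p)⁻¹ - 1) = 1 - (1 - y^p) := by field_simp
  nlinarith [mul_lt_mul_of_pos_left h1 hu]

lemma cont_base (hp : 1 < p) : Continuous (fun t : ℝ => 1 - t ^ p) := by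
  refine continuous_const.sub ?_
  refine continuous_iff_continuousAt.2 fun x => ?_
  exact Real.continuousAt_rpow_const x p (Or.inr (by linarith))

lemma contOn (hp : 1 < p) :
    ContinuousOn (fun t : ℝ => (1 - t ^ p) ^ (-1 / p)) (Iio (1:ℝ) ∩ Ioi 0) := by
  apply ContinuousOn.rpow_const ((cont_base hp).continuousOn)
  intro t ht
  exact Or.inl (ne_of_gt (u_pos hp ht.2.le ht.1))

lemma contOnIcc (hp : 1 < p) {b : ℝ} (hb1 : b < 1) :
    ContinuousOn (fun t : ℝ => (1 - t ^ p) ^ (-1 / p)) (Icc 0 b) := by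
  apply ContinuousOn.rpow_const ((cont_base hp).continuousOn)
  intro t ht
  exact Or.inl (ne_of_gt (u_pos hp ht.1 (lt_of_le_of_lt ht.2 hb1)))

lemma integrable (hp : 1 < p) {b : ℝ} (hb0 : 0 ≤ b) (hb1 : b < 1) :
    IntervalIntegrable (fun t : ℝ => (1 - t ^ p) ^ (-1 / p)) volume 0 b :=
  ContinuousOn.intervalIntegrable (by rw [uIcc_of_le hb0]; exact contOnIcc hp hb1)

lemma hasDerivAt_arcsinp (hp : 1 < p) {y : ℝ} (hy : y ∈ Ioo (0:ℝ) 1) :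
    HasDerivAt (arcsinp p) ((1 - y ^ p) ^ (-1 / p)) y := by
  have hmeas : StronglyMeasurableAtFilter (fun t : ℝ => (1 - t ^ p) ^ (-1 / p)) (nhds y) :=
    ContinuousOn.stronglyMeasurableAtFilter (isOpen_Iio.inter isOpen_Ioi)
      (contOn hp) y ⟨hy.2, hy.1⟩
  have hcont : ContinuousAt (fun t : ℝ => (1 - t ^ p) ^ (-1 / p)) y :=
    (contOn hp).continuousAt (((isOpen_Iio.inter isOpen_Ioi).mem_nhds ⟨hy.2, hy.1⟩))
  exact intervalIntegral.integral_hasDerivAt_right (integrable hp hy.1.le hy.2) hmeas hcont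

lemma arcsinp_pos (hp : 1 < p) {y : ℝ} (hy : y ∈ Ioo (0:ℝ) 1) : 0 < arcsinp p y := by
  refine intervalIntegral.intervalIntegral_pos_of_pos_on (integrable hp hy.1.le hy.2) ?_ hy.1
  intro t ht
  exact Real.rpow_pos_of_pos (u_pos hp ht.1.le (lt_trans ht.2 hy.2)) _

lemma bound_two (hp : 1 < p) {t : ℝ} (h0 : 0 ≤ t) (h2 : t ≤ 1/2) :
    (1 - t ^ p) ^ (-1/p) ≤ 2 := by
  have htp : t ^ p ≤ 1/2 := by
    rcases eq_or_lt_of_le h0 with h | h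
    · rw [← h, Real.zero_rpow (by positivity)]; norm_num
    · have h1 : t ^ p ≤ t ^ (1:ℝ) :=
        Real.rpow_le_rpow_of_exponent_ge h (by linarith) (by linarith)
      rw [Real.rpow_one] at h1
      linarith
  have hhalf : (1:ℝ)/2 ≤ 1 - t ^ p := by linarith
  calc (1 - t ^ p) ^ (-1/p) ≤ ((1:ℝ)/2) ^ (-1/p) :=
        Real.rpow_le_rpow_of_nonpos (by norm_num) hhalf
          (by rw [neg_div]; exact neg_nonpos.mpr (by positivity))
    _ = 2 ^ (1/p) := by
        rw [show (1:ℝ)/2 = 2⁻¹ by norm_num, Real.inv_rpow (by norm_num),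
          ← Real.rpow_neg (by norm_num)]
        norm_num [neg_div]
    _ ≤ 2 ^ (1:ℝ) := Real.rpow_le_rpow_of_exponent_le (by norm_num)
        (by rw [div_le_one (by linarith)]; linarith)
    _ = 2 := by norm_num

lemma arcsinp_le (hp : 1 < p) {y : ℝ} (hy : y ∈ Ioo (0:ℝ) (1/2)) : arcsinp p y ≤ 2 * y := by
  have h2 : ∀ t ∈ Icc (0:ℝ) y, (1 - t ^ p) ^ (-1/p) ≤ 2 := fun t ht =>
    bound_two hp ht.1 (by linarith [ht.2, hy.2])
  have hy1 : y < 1 := by linarith [hy.2]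
  have := intervalIntegral.integral_mono_on (μ := volume) hy.1.le
    (integrable hp hy.1.le hy1) (intervalIntegrable_const) h2
  rw [intervalIntegral.integral_const] at this
  simpa [arcsinp, smul_eq_mul, mul_comm] using this

lemma arcsinp_nonneg (hp : 1 < p) {y : ℝ} (hy0 : 0 ≤ y) (hy1 : y < 1) : 0 ≤ arcsinp p y := by
  refine intervalIntegral.integral_nonneg hy0 fun t ht => ?_
  exact Real.rpow_nonneg (le_of_lt (u_pos hp ht.1 (lt_of_le_of_lt ht.2 hy1))) _

lemma tendsto_arcsinp (hp : 1 < p) :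
    Tendsto (arcsinp p) (nhdsWithin 0 (Ioi 0)) (nhds 0) := by
  apply squeeze_zero'
  · filter_upwards [Ioo_mem_nhdsGT_of_mem (α := ℝ) ⟨le_refl 0, (by norm_num : (0:ℝ) < 1/2)⟩]
      with y hy
    exact arcsinp_nonneg hp hy.1.le (by linarith [hy.2])
  · filter_upwards [Ioo_mem_nhdsGT_of_mem (α := ℝ) ⟨le_refl 0, (by norm_num : (0:ℝ) < 1/2)⟩]
      with y hy
    exact arcsinp_le hp hy
  · have : Tendsto (fun y : ℝ => 2 * y) (nhds 0) (nhds 0) := by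
      simpa using (continuous_mul_left (2:ℝ)).tendsto (0:ℝ)
    exact this.mono_left nhdsWithin_le_nhds

lemma hasDerivAt_H (hp : 1 < p) {y : ℝ} (hy : y ∈ Ioo (0:ℝ) 1) :
    HasDerivAt (H p) (p * y ^ (p-1) / (1 - y ^ p)) y := by
  have hyp : HasDerivAt (fun y : ℝ => y ^ p) (p * y ^ (p-1)) y :=
    Real.hasDerivAt_rpow_const (Or.inl hy.1.ne')
  have hu : HasDerivAt (fun y : ℝ => 1 - y ^ p) (-(p * y ^ (p-1))) y := hyp.const_sub 1
  have hlog := (hu.log (ne_of_gt (u_pos hp hy.1.le hy.2))).neg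
  rw [neg_div, neg_neg] at hlog
  exact hlog

lemma hasDerivAt_HF1 (hp : 1 < p) {y : ℝ} (hy : y ∈ Ioo (0:ℝ) 1) :
    HasDerivAt (fun y => (H p y) ^ (1/p))
      (y ^ (p-1) * (H p y) ^ ((1-p)/p) / (1 - y ^ p)) y := by
  have h1 := (hasDerivAt_H hp hy).rpow_const (p := 1/p) (Or.inl (h_pos hp hy).ne')
  convert h1 using 1
  have hp0 : p ≠ 0 := ne_of_gt (by linarith)
  have hu0 : (1 - y ^ p) ≠ 0 := (u_pos hp hy.1.le hy.2).ne'
  rw [show 1/p - 1 = (1-p)/p by field_simp]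
  rw [show p * y ^ (p-1) / (1 - y ^ p) * (1/p) = y ^ (p-1) / (1-y^p) by field_simp]
  ring

/-- derivative of `h^{1/p} - x` is positive on `(0,1)` -/
lemma Fderiv_pos (hp : 1 < p) {y : ℝ} (hy : y ∈ Ioo (0:ℝ) 1) :
    (1 - y ^ p) ^ (-1/p) < y ^ (p-1) * (H p y) ^ ((1-p)/p) / (1 - y ^ p) := by
  have hu := u_pos hp hy.1.le hy.2
  have hH := h_pos hp hy
  have hq : 0 < (p-1)/p := div_pos (by linarith) (by linarith)
  have hkey : (1 - y ^ p) < y ^ p / H p y := by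
    rw [lt_div_iff₀ hH]; linarith [key hp hy]
  have main : (1 - y ^ p) ^ ((p-1)/p) < y ^ (p-1) * (H p y) ^ ((1-p)/p) := by
    have e1 : y ^ (p-1) = (y ^ p) ^ ((p-1)/p) := by
      rw [← Real.rpow_mul hy.1.le]
      congr 1
      field_simp
    have e2 : (H p y) ^ ((1-p)/p) = ((H p y) ^ ((p-1)/p))⁻¹ := by
      rw [show (1-p)/p = -((p-1)/p) by ring, Real.rpow_neg hH.le]
    rw [e1, e2, ← div_eq_mul_inv, ← Real.div_rpow (le_of_lt (tp_pos hp hy.1)) hH.le]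
    exact Real.rpow_lt_rpow hu.le hkey hq
  have hp0 : p ≠ 0 := ne_of_gt (by linarith)
  have e3 : (1 - y ^ p) ^ (-1/p) = (1 - y ^ p) ^ ((p-1)/p) / (1 - y ^ p) := by
    rw [eq_div_iff (ne_of_gt hu), ← Real.rpow_add_one (ne_of_gt hu)]
    congr 1
    field_simp
    ring
  rw [e3]
  exact (div_lt_div_iff_of_pos_right hu).2 main


lemma yp1_eq {y : ℝ} (hy0 : 0 < y) : y ^ (p-1) = y ^ p / y := by
  rw [Real.rpow_sub hy0, Real.rpow_one]

lemma y1p_eq {y : ℝ} (hy0 : 0 < y) : y ^ (1-p) = y / y ^ p := by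
  rw [Real.rpow_sub hy0, Real.rpow_one]

lemma ypm_eq {y : ℝ} (hy0 : 0 < y) : y ^ (1-p-1) = (y ^ p)⁻¹ := by
  rw [show 1-p-1 = -p by ring, Real.rpow_neg hy0.le]

lemma uq_eq (hp : 1 < p) {y : ℝ} (hu : 0 < 1 - y ^ p) :
    (1 - y ^ p) ^ ((p-1)/p) = (1 - y ^ p) * (1 - y ^ p) ^ (-1/p) := by
  have hp0 : p ≠ 0 := ne_of_gt (by linarith)
  rw [show (p-1)/p = 1 + (-1/p) by field_simp; ring, Real.rpow_add hu, Real.rpow_one]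

lemma uqm1_eq (hp : 1 < p) {y : ℝ} :
    (1 - y ^ p) ^ ((p-1)/p - 1) = (1 - y ^ p) ^ (-1/p) := by
  have hp0 : p ≠ 0 := ne_of_gt (by linarith)
  congr 1
  field_simp
  ring

lemma hasDerivAt_G (hp : 1 < p) {y : ℝ} (hy : y ∈ Ioo (0:ℝ) 1) :
    HasDerivAt (fun y => arcsinp p y - W p y)
      ((p-1) * (1 - y ^ p) ^ (-1/p) * (H p y / y ^ p - 1)) y := by
  have hu := u_pos hp hy.1.le hy.2
  have hyp : HasDerivAt (fun y : ℝ => y ^ p) (p * y ^ (p-1)) y :=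
    Real.hasDerivAt_rpow_const (Or.inl hy.1.ne')
  have hus : HasDerivAt (fun y : ℝ => 1 - y ^ p) (-(p * y ^ (p-1))) y := hyp.const_sub 1
  have huq : HasDerivAt (fun y : ℝ => (1 - y ^ p) ^ ((p-1)/p))
      (-(p * y ^ (p-1)) * ((p-1)/p) * (1 - y ^ p) ^ ((p-1)/p - 1)) y :=
    hus.rpow_const (p := (p-1)/p) (Or.inl hu.ne')
  have hyq : HasDerivAt (fun y : ℝ => y ^ (1-p)) ((1-p) * y ^ (1-p-1)) y :=
    Real.hasDerivAt_rpow_const (Or.inl hy.1.ne')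
  have hW : HasDerivAt (W p)
      ((p * y ^ (p-1) / (1 - y ^ p) * (1 - y ^ p) ^ ((p-1)/p)
        + H p y * (-(p * y ^ (p-1)) * ((p-1)/p) * (1 - y ^ p) ^ ((p-1)/p - 1))) * y ^ (1-p)
        + H p y * (1 - y ^ p) ^ ((p-1)/p) * ((1-p) * y ^ (1-p-1))) y := by
    show HasDerivAt (fun y => H p y * (1 - y ^ p) ^ ((p-1)/p) * y ^ (1-p)) _ y
    exact ((hasDerivAt_H hp hy).mul huq).mul hyq
  have hG := (hasDerivAt_arcsinp hp hy).sub hW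
  refine hG.congr_deriv ?_
  have hp0 : p ≠ 0 := ne_of_gt (by linarith)
  have hy0 : y ≠ 0 := hy.1.ne'
  have hyppos : (0:ℝ) < y ^ p := tp_pos hp hy.1
  rw [uq_eq hp hu, uqm1_eq hp, y1p_eq hy.1, yp1_eq hy.1, ypm_eq hy.1]
  field_simp
  ring

lemma Gderiv_pos (hp : 1 < p) {y : ℝ} (hy : y ∈ Ioo (0:ℝ) 1) :
    0 < (p-1) * (1 - y ^ p) ^ (-1/p) * (H p y / y ^ p - 1) := by
  have hu := u_pos hp hy.1.le hy.2
  refine mul_pos (mul_pos (by linarith) (Real.rpow_pos_of_pos hu _)) ?_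
  rw [sub_pos, lt_div_iff₀ (tp_pos hp hy.1), one_mul]
  exact h_gt hp hy

lemma WH' (hp : 1 < p) {y : ℝ} (hy : y ∈ Ioo (0:ℝ) 1) :
    p * (1 - y ^ p) ^ (-1/p) * H p y = W p y * (p * y ^ (p-1) / (1 - y ^ p)) := by
  have hu := u_pos hp hy.1.le hy.2
  have hp0 : p ≠ 0 := ne_of_gt (by linarith)
  have hy0 : y ≠ 0 := hy.1.ne'
  have hyppos : (0:ℝ) < y ^ p := tp_pos hp hy.1
  unfold W
  rw [uq_eq hp hu, y1p_eq hy.1, yp1_eq hy.1]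
  field_simp

/-- generic positivity from strict monotonicity + zero limit -/
lemma pos_of_mono {f : ℝ → ℝ} (hmono : StrictMonoOn f (Ioo 0 1))
    (hten : Tendsto f (nhdsWithin 0 (Ioi 0)) (nhds 0)) {y : ℝ} (hy : y ∈ Ioo (0:ℝ) 1) :
    0 < f y := by
  have hhalf : y/2 ∈ Ioo (0:ℝ) 1 := ⟨by linarith [hy.1], by linarith [hy.2]⟩
  have h1 : f (y/2) < f y := hmono hhalf hy (by linarith [hy.1])
  have h2 : 0 ≤ f (y/2) := by
    refine le_of_tendsto hten ?_
    filter_upwards [Ioo_mem_nhdsGT_of_mem ⟨le_refl (0:ℝ), half_pos hy.1⟩] with t ht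
    exact (hmono ⟨ht.1, by linarith [ht.2, hy.2]⟩ hhalf ht.2).le
  linarith

lemma tendsto_HF1 (hp : 1 < p) :
    Tendsto (fun y => (H p y) ^ (1/p)) (nhdsWithin 0 (Ioi 0)) (nhds 0) := by
  have hp0 : p ≠ 0 := ne_of_gt (by linarith)
  have H0 : H p 0 = 0 := by unfold H; rw [Real.zero_rpow hp0]; simp
  have hb : ContinuousAt (fun y : ℝ => 1 - y ^ p) 0 := (cont_base hp).continuousAt
  have hval : (1:ℝ) - (0:ℝ) ^ p = 1 := by rw [Real.zero_rpow hp0]; ring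
  have hlog : ContinuousAt (fun u : ℝ => -Real.log u) ((1:ℝ) - (0:ℝ) ^ p) := by
    rw [hval]; exact (Real.continuousAt_log one_ne_zero).neg
  have hH : ContinuousAt (H p) 0 := by
    have h := ContinuousAt.comp (g := fun u : ℝ => -Real.log u) (f := fun y : ℝ => 1 - y ^ p)
      hlog hb
    exact h
  have hout : ContinuousAt (fun u : ℝ => u ^ (1/p)) (H p 0) := by
    rw [H0]
    exact Real.continuousAt_rpow_const 0 (1/p) (Or.inr (le_of_lt (one_div_pos.2 (by linarith))))
  have hcomp : ContinuousAt (fun y => (H p y) ^ (1/p)) 0 := hout.comp hH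
  have h2 : Tendsto (fun y => (H p y) ^ (1/p)) (nhdsWithin 0 (Ioi 0)) (nhds ((H p 0) ^ (1/p))) :=
    hcomp.tendsto.mono_left nhdsWithin_le_nhds
  rw [H0, Real.zero_rpow (ne_of_gt (one_div_pos.2 (show (0:ℝ) < p by linarith)))] at h2
  exact h2

lemma tendsto_W (hp : 1 < p) : Tendsto (W p) (nhdsWithin 0 (Ioi 0)) (nhds 0) := by
  apply squeeze_zero'
  · filter_upwards [Ioo_mem_nhdsGT_of_mem (α := ℝ) ⟨le_refl 0, (by norm_num : (0:ℝ) < 1/2)⟩]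
      with y hy
    have hy1 : y ∈ Ioo (0:ℝ) 1 := ⟨hy.1, by linarith [hy.2]⟩
    have hu := u_pos hp hy1.1.le hy1.2
    exact mul_nonneg (mul_nonneg (h_pos hp hy1).le (Real.rpow_nonneg hu.le _))
      (Real.rpow_nonneg hy.1.le _)
  · filter_upwards [Ioo_mem_nhdsGT_of_mem (α := ℝ) ⟨le_refl 0, (by norm_num : (0:ℝ) < 1/2)⟩]
      with y hy
    have hy1 : y ∈ Ioo (0:ℝ) 1 := ⟨hy.1, by linarith [hy.2]⟩
    have hu := u_pos hp hy1.1.le hy1.2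
    have hp0 : p ≠ 0 := ne_of_gt (by linarith)
    have hyppos : (0:ℝ) < y ^ p := tp_pos hp hy.1
    have hfac : 0 ≤ (1 - y ^ p) ^ ((p-1)/p) * y ^ (1-p) :=
      mul_nonneg (Real.rpow_nonneg hu.le _) (Real.rpow_nonneg hy.1.le _)
    have h1 : W p y ≤ (y ^ p / (1 - y ^ p)) * ((1 - y ^ p) ^ ((p-1)/p) * y ^ (1-p)) := by
      unfold W
      rw [mul_assoc]
      exact mul_le_mul_of_nonneg_right (h_le hp hy1) hfac
    have h2 : (y ^ p / (1 - y ^ p)) * ((1 - y ^ p) ^ ((p-1)/p) * y ^ (1-p))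
        = y * (1 - y ^ p) ^ (-1/p) := by
      rw [uq_eq hp hu, y1p_eq hy.1]
      field_simp
    have h3 : y * (1 - y ^ p) ^ (-1/p) ≤ y * 2 :=
      mul_le_mul_of_nonneg_left (bound_two hp hy.1.le (le_of_lt hy.2)) hy.1.le
    calc W p y ≤ y * (1 - y ^ p) ^ (-1/p) := by rw [← h2]; exact h1
      _ ≤ y * 2 := h3
      _ = 2 * y := by ring
  · have : Tendsto (fun y : ℝ => 2 * y) (nhds 0) (nhds (0:ℝ)) := by
      simpa using (continuous_mul_left (2:ℝ)).tendsto (0:ℝ)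
    exact this.mono_left nhdsWithin_le_nhds

lemma X_lt (hp : 1 < p) {y : ℝ} (hy : y ∈ Ioo (0:ℝ) 1) :
    arcsinp p y < (H p y) ^ (1/p) := by
  have hmono : StrictMonoOn (fun y => (H p y) ^ (1/p) - arcsinp p y) (Ioo 0 1) := by
    apply strictMonoOn_of_deriv_pos (convex_Ioo 0 1)
    · intro x hx
      exact (((hasDerivAt_HF1 hp hx).sub (hasDerivAt_arcsinp hp hx)).differentiableAt.continuousAt).continuousWithinAt
    · intro x hx
      rw [interior_Ioo] at hx
      rw [(show HasDerivAt (fun y => (H p y) ^ (1/p) - arcsinp p y) _ x from (hasDerivAt_HF1 hp hx).sub (hasDerivAt_arcsinp hp hx)).deriv]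
      have := Fderiv_pos hp hx
      linarith
  have hten : Tendsto (fun y => (H p y) ^ (1/p) - arcsinp p y) (nhdsWithin 0 (Ioi 0)) (nhds 0) := by
    simpa using (tendsto_HF1 hp).sub (tendsto_arcsinp hp)
  have := pos_of_mono hmono hten hy
  linarith [this]

lemma W_lt (hp : 1 < p) {y : ℝ} (hy : y ∈ Ioo (0:ℝ) 1) : W p y < arcsinp p y := by
  have hmono : StrictMonoOn (fun y => arcsinp p y - W p y) (Ioo 0 1) := by
    apply strictMonoOn_of_deriv_pos (convex_Ioo 0 1)
    · intro x hx
      exact ((hasDerivAt_G hp hx).differentiableAt.continuousAt).continuousWithinAt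
    · intro x hx
      rw [interior_Ioo] at hx
      rw [(hasDerivAt_G hp hx).deriv]
      exact Gderiv_pos hp hx
  have hten : Tendsto (fun y => arcsinp p y - W p y) (nhdsWithin 0 (Ioi 0)) (nhds 0) := by
    simpa using (tendsto_arcsinp hp).sub (tendsto_W hp)
  have := pos_of_mono hmono hten hy
  linarith [this]

lemma hasDerivAt_Phi (hp : 1 < p) {y : ℝ} (hy : y ∈ Ioo (0:ℝ) 1) :
    HasDerivAt (fun y => (arcsinp p y) ^ p / H p y)
      (((1 - y ^ p) ^ (-1/p) * p * (arcsinp p y) ^ (p-1) * H p y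
        - (arcsinp p y) ^ p * (p * y ^ (p-1) / (1 - y ^ p))) / (H p y) ^ 2) y :=
  HasDerivAt.div ((hasDerivAt_arcsinp hp hy).rpow_const (Or.inl (arcsinp_pos hp hy).ne'))
    (hasDerivAt_H hp hy) (h_pos hp hy).ne'

lemma Phideriv_neg (hp : 1 < p) {y : ℝ} (hy : y ∈ Ioo (0:ℝ) 1) :
    ((1 - y ^ p) ^ (-1/p) * p * (arcsinp p y) ^ (p-1) * H p y
      - (arcsinp p y) ^ p * (p * y ^ (p-1) / (1 - y ^ p))) / (H p y) ^ 2 < 0 := by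
  have hu := u_pos hp hy.1.le hy.2
  have hX := arcsinp_pos hp hy
  apply div_neg_of_neg_of_pos _ (pow_pos (h_pos hp hy) 2)
  have hh' : 0 < p * y ^ (p-1) / (1 - y ^ p) :=
    div_pos (mul_pos (by linarith) (Real.rpow_pos_of_pos hy.1 _)) hu
  have h2 : W p y * (p * y ^ (p-1) / (1 - y ^ p))
      < arcsinp p y * (p * y ^ (p-1) / (1 - y ^ p)) :=
    mul_lt_mul_of_pos_right (W_lt hp hy) hh'
  have eX : (arcsinp p y) ^ p = (arcsinp p y) ^ (p-1) * arcsinp p y := by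
    rw [← Real.rpow_add_one hX.ne' (p-1)]
    congr 1
    ring
  have hre : (1 - y ^ p) ^ (-1/p) * p * (arcsinp p y) ^ (p-1) * H p y
      - (arcsinp p y) ^ p * (p * y ^ (p-1) / (1 - y ^ p))
      = (arcsinp p y) ^ (p-1) * ((p * (1 - y ^ p) ^ (-1/p) * H p y)
        - arcsinp p y * (p * y ^ (p-1) / (1 - y ^ p))) := by
    rw [eX]; ring
  rw [hre, WH' hp hy]
  exact mul_neg_of_pos_of_neg (Real.rpow_pos_of_pos hX _) (by linarith)

lemma strictAntiPhi (hp : 1 < p) :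
    StrictAntiOn (fun y => (arcsinp p y) ^ p / H p y) (Ioo (0:ℝ) 1) := by
  apply strictAntiOn_of_deriv_neg (convex_Ioo 0 1)
  · intro x hx
    exact ((hasDerivAt_Phi hp hx).differentiableAt.continuousAt).continuousWithinAt
  · intro x hx
    rw [interior_Ioo] at hx
    rw [(hasDerivAt_Phi hp hx).deriv]
    exact Phideriv_neg hp hx

end EBC

/-- For `p > 1`, `exp(α₁ x^p) < cosₚ x < exp(β₁ x^p)` on `(0, a)` with `a < πₚ/2`,
`α₁ = ln(cosₚ a)/a^p`, `β₁ = −1/p`, stated via `y = sinₚ x`, `x = arcsinₚ y`. -/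
theorem exp_bounds_cosp (p : ℝ) (hp : 1 < p) (y₀ : ℝ) (hy₀ : y₀ ∈ Set.Ioo (0:ℝ) 1)
    (a α₁ β₁ : ℝ) (ha : a = arcsinp p y₀)
    (hα₁ : α₁ = Real.log ((1 - y₀ ^ p) ^ (1 / p)) / a ^ p)
    (hβ₁ : β₁ = -1 / p) :
    ∀ y ∈ Set.Ioo 0 y₀,
      Real.exp (α₁ * arcsinp p y ^ p) < (1 - y ^ p) ^ (1 / p) ∧
      (1 - y ^ p) ^ (1 / p) < Real.exp (β₁ * arcsinp p y ^ p) := by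
  intro y hy
  have hp0 : (0:ℝ) < p := by linarith
  have hy01 : y ∈ Set.Ioo (0:ℝ) 1 := ⟨hy.1, lt_trans hy.2 hy₀.2⟩
  have hu : 0 < 1 - y ^ p := EBC.u_pos hp hy01.1.le hy01.2
  have hu₀ : 0 < 1 - y₀ ^ p := EBC.u_pos hp hy₀.1.le hy₀.2
  have hX : 0 < arcsinp p y := EBC.arcsinp_pos hp hy01
  have hHy : 0 < EBC.H p y := EBC.h_pos hp hy01
  have hH₀ : 0 < EBC.H p y₀ := EBC.h_pos hp hy₀
  have ha' : 0 < a := ha ▸ EBC.arcsinp_pos hp hy₀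
  have hap : 0 < a ^ p := Real.rpow_pos_of_pos ha' p
  have hlogu : Real.log (1 - y ^ p) = -(EBC.H p y) := by unfold EBC.H; ring
  have hlogu₀ : Real.log (1 - y₀ ^ p) = -(EBC.H p y₀) := by unfold EBC.H; ring
  have hXp : arcsinp p y ^ p < EBC.H p y := by
    have h1 := EBC.X_lt hp hy01
    have h2 : arcsinp p y ^ p < ((EBC.H p y) ^ (1/p)) ^ p :=
      Real.rpow_lt_rpow hX.le h1 hp0
    rwa [← Real.rpow_mul hHy.le, one_div, inv_mul_cancel₀ (ne_of_gt hp0),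
      Real.rpow_one] at h2
  constructor
  · -- lower bound
    have hPhi : a ^ p / EBC.H p y₀ < arcsinp p y ^ p / EBC.H p y := by
      have h := EBC.strictAntiPhi hp hy01 hy₀ hy.2
      rw [ha]
      exact h
    have hcross : a ^ p * EBC.H p y < arcsinp p y ^ p * EBC.H p y₀ :=
      (div_lt_div_iff₀ hH₀ hHy).1 hPhi
    have hα : α₁ = -(EBC.H p y₀ / (p * a ^ p)) := by
      rw [hα₁, Real.log_rpow hu₀, hlogu₀]
      field_simp
    rw [← Real.exp_log (Real.rpow_pos_of_pos hu (1/p))]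
    apply Real.exp_lt_exp.2
    rw [Real.log_rpow hu, hlogu, hα]
    have hBA : EBC.H p y / p < EBC.H p y₀ * arcsinp p y ^ p / (p * a ^ p) := by
      rw [div_lt_div_iff₀ hp0 (mul_pos hp0 hap)]
      nlinarith [hcross]
    have e1 : -(EBC.H p y₀ / (p * a ^ p)) * arcsinp p y ^ p
        = -(EBC.H p y₀ * arcsinp p y ^ p / (p * a ^ p)) := by ring
    have e2 : 1 / p * -(EBC.H p y) = -(EBC.H p y / p) := by ring
    rw [e1, e2]
    exact neg_lt_neg hBA
  · -- upper bound
    rw [hβ₁, ← Real.exp_log (Real.rpow_pos_of_pos hu (1/p))]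
    apply Real.exp_lt_exp.2
    rw [Real.log_rpow hu, hlogu, neg_div]
    have h1 : 0 < 1/p := one_div_pos.2 hp0
    nlinarith [mul_pos h1 (sub_pos.2 hXp)]
end

section
/- Let p ≥ 2 be a real number, fix y₀ > 0, and set c = arcsinhₚ(y₀), λ = −1/(p(p+1)) and η = ln(c/y₀)/c^p. Then for every y ∈ (0, y₀), writing x = arcsinhₚ(y), one has exp(λ·x^p) < x/y < exp(η·x^p). (This is the double inequality exp(λ x^p) < x/sinhₚ(x) < exp(η x^p) for x ∈ (0, c), with η = ln(c/sinhₚ c)/c^p.) -/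
open Real Set MeasureTheory Filter Topology

namespace SinhpAux

variable {p : ℝ}

lemma base_pos (hp : 0 < p) {t : ℝ} (ht : 0 ≤ t) : 0 < 1 + t ^ p := by
  have := Real.rpow_nonneg ht p; linarith

lemma integrand_contAt (hp : 0 < p) {t : ℝ} (ht : 0 ≤ t) :
    ContinuousAt (fun t : ℝ => (1 + t ^ p) ^ (-1 / p)) t := by
  have h1 : ContinuousAt (fun t : ℝ => 1 + t ^ p) t :=
    continuousAt_const.add (Real.continuousAt_rpow_const t p (Or.inr hp.le))
  exact ContinuousAt.comp (g := fun u : ℝ => u ^ (-1 / p))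
    (Real.continuousAt_rpow_const _ _ (Or.inl (base_pos hp ht).ne')) h1

lemma integrable (hp : 0 < p) {y : ℝ} (hy : 0 ≤ y) :
    IntervalIntegrable (fun t : ℝ => (1 + t ^ p) ^ (-1 / p)) volume 0 y := by
  apply ContinuousOn.intervalIntegrable
  intro t ht
  rw [uIcc_of_le hy] at ht
  exact (integrand_contAt hp ht.1).continuousWithinAt

lemma hasDeriv_arcsinhp (hp : 0 < p) {y : ℝ} (hy : 0 < y) :
    HasDerivAt (arcsinhp p) ((1 + y ^ p) ^ (-1 / p)) y := by
  exact intervalIntegral.integral_hasDerivAt_right (integrable hp hy.le)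
    (ContinuousAt.stronglyMeasurableAtFilter isOpen_Ioi
      (fun t ht => integrand_contAt hp (le_of_lt ht)) y hy)
    (integrand_contAt hp hy.le)

lemma arcsinhp_zero : arcsinhp p 0 = 0 := intervalIntegral.integral_same

lemma arcsinhp_lt (hp : 0 < p) {y : ℝ} (hy : 0 < y) : arcsinhp p y < y := by
  have h : (0:ℝ) < ∫ t in (0:ℝ)..y, ((1:ℝ) - (1 + t ^ p) ^ (-1 / p)) := by
    apply intervalIntegral.intervalIntegral_pos_of_pos_on
    · exact (intervalIntegrable_const (c := (1:ℝ))).sub (integrable hp hy.le)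
    · intro t ht
      have h1 : 1 < 1 + t ^ p := by
        have := Real.rpow_pos_of_pos ht.1 p; linarith
      have h2 := Real.rpow_lt_one_of_one_lt_of_neg h1
        (show -1/p < 0 by rw [neg_div]; exact neg_neg_iff_pos.mpr (by positivity))
      linarith
    · exact hy
  have heq : (∫ t in (0:ℝ)..y, ((1:ℝ) - (1 + t ^ p) ^ (-1 / p)))
      = y - arcsinhp p y := by
    rw [intervalIntegral.integral_sub (intervalIntegrable_const) (integrable hp hy.le)]
    simp [arcsinhp]
  rw [heq] at h; linarith

lemma arcsinhp_gt (hp : 0 < p) {y : ℝ} (hy : 0 < y) :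
    y * (1 + y ^ p) ^ (-1 / p) < arcsinhp p y := by
  have h : (0:ℝ) < ∫ t in (0:ℝ)..y,
      ((1 + t ^ p) ^ (-1 / p) - (1 + y ^ p) ^ (-1 / p)) := by
    apply intervalIntegral.intervalIntegral_pos_of_pos_on
    · exact (integrable hp hy.le).sub (intervalIntegrable_const)
    · intro t ht
      have h1 : 1 + t ^ p < 1 + y ^ p := by
        have := Real.rpow_lt_rpow ht.1.le ht.2 hp; linarith
      have h2 : (1 + y ^ p) ^ (-1/p) < (1 + t ^ p) ^ (-1/p) := by
        apply Real.rpow_lt_rpow_of_neg (base_pos hp ht.1.le) h1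
        rw [neg_div]; exact neg_neg_iff_pos.mpr (by positivity)
      linarith
    · exact hy
  have heq : (∫ t in (0:ℝ)..y, ((1 + t ^ p) ^ (-1 / p) - (1 + y ^ p) ^ (-1 / p)))
      = arcsinhp p y - y * (1 + y ^ p) ^ (-1 / p) := by
    rw [intervalIntegral.integral_sub (integrable hp hy.le) (intervalIntegrable_const)]
    simp [arcsinhp, mul_comm]
  rw [heq] at h; linarith

lemma arcsinhp_pos (hp : 0 < p) {y : ℝ} (hy : 0 < y) : 0 < arcsinhp p y := by
  have h := arcsinhp_gt hp hy
  have : 0 < y * (1 + y ^ p) ^ (-1 / p) := by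
    have := Real.rpow_pos_of_pos (base_pos hp hy.le) (-1/p); positivity
  linarith

end SinhpAux

namespace SinhpAux2
open SinhpAux

variable {p : ℝ}

-- conversion lemmas
lemma c_inv (hp : 0 < p) {y : ℝ} (hy : 0 ≤ y) :
    (1 + y ^ p) ^ (-1 / p) = ((1 + y ^ p) ^ (1 / p))⁻¹ := by
  rw [neg_div, Real.rpow_neg (base_pos hp hy).le]

lemma c_pm1 (hp : 0 < p) {y : ℝ} (hy : 0 ≤ y) :
    (1 + y ^ p) ^ ((p - 1) / p) = (1 + y ^ p) * ((1 + y ^ p) ^ (1 / p))⁻¹ := by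
  have h : (p - 1) / p = 1 - 1 / p := by field_simp
  rw [h, Real.rpow_sub (base_pos hp hy), Real.rpow_one, div_eq_mul_inv]

lemma c_pm2 (hp : 0 < p) {y : ℝ} (hy : 0 ≤ y) :
    (1 + y ^ p) ^ ((p - 2) / p)
      = (1 + y ^ p) * (((1 + y ^ p) ^ (1 / p)) * ((1 + y ^ p) ^ (1 / p)))⁻¹ := by
  have h : (p - 2) / p = 1 - (1 / p + 1 / p) := by field_simp; ring
  rw [h, Real.rpow_sub (base_pos hp hy), Real.rpow_one, Real.rpow_add (base_pos hp hy),
    div_eq_mul_inv]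

lemma c_q1 (hp : 0 < p) {y : ℝ} (hy : 0 ≤ y) :
    (1 + y ^ p) ^ (1 / p - 1) = ((1 + y ^ p) ^ (1 / p)) * (1 + y ^ p)⁻¹ := by
  rw [Real.rpow_sub (base_pos hp hy), Real.rpow_one, div_eq_mul_inv]

lemma c_ym1 {y : ℝ} (hy : 0 < y) (p : ℝ) : y ^ (p - 1) = y ^ p * y⁻¹ := by
  rw [Real.rpow_sub hy, Real.rpow_one, div_eq_mul_inv]

lemma v_pos (hp : 0 < p) {y : ℝ} (hy : 0 ≤ y) : 0 < (1 + y ^ p) ^ (1 / p) :=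
  Real.rpow_pos_of_pos (base_pos hp hy) _

-- monotone helpers
lemma pos_of_deriv_pos {g G : ℝ → ℝ} (hc : ContinuousOn g (Ici 0)) (h0 : g 0 = 0)
    (hd : ∀ y, 0 < y → HasDerivAt g (G y) y) (hG : ∀ y, 0 < y → 0 < G y) :
    ∀ y, 0 < y → 0 < g y := by
  have mono : StrictMonoOn g (Ici 0) := by
    apply strictMonoOn_of_deriv_pos (convex_Ici 0) hc
    intro y hy
    rw [interior_Ici] at hy
    rw [(hd y hy).deriv]
    exact hG y hy
  intro y hy
  have := mono (self_mem_Ici) (mem_Ici.mpr hy.le) hy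
  rwa [h0] at this

lemma neg_of_deriv_neg {g G : ℝ → ℝ} (hc : ContinuousOn g (Ici 0)) (h0 : g 0 = 0)
    (hd : ∀ y, 0 < y → HasDerivAt g (G y) y) (hG : ∀ y, 0 < y → G y < 0) :
    ∀ y, 0 < y → g y < 0 := by
  have mono : StrictAntiOn g (Ici 0) := by
    apply strictAntiOn_of_deriv_neg (convex_Ici 0) hc
    intro y hy
    rw [interior_Ici] at hy
    rw [(hd y hy).deriv]
    exact hG y hy
  intro y hy
  have := mono (self_mem_Ici) (mem_Ici.mpr hy.le) hy
  rwa [h0] at this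

lemma pos_of_tendsto_zero {g : ℝ → ℝ} (hmono : StrictMonoOn g (Ioi 0))
    (hlim : Tendsto g (𝓝[>] (0:ℝ)) (𝓝 0)) : ∀ y, 0 < y → 0 < g y := by
  intro y hy
  have h2 : 0 ≤ g (y / 2) := by
    apply le_of_tendsto hlim
    filter_upwards [Ioo_mem_nhdsGT_of_mem (⟨le_rfl, half_pos hy⟩ : (0:ℝ) ∈ Ico 0 (y/2))]
      with t ht
    exact (hmono (mem_Ioi.mpr ht.1) (mem_Ioi.mpr (half_pos hy)) ht.2).le
  exact lt_of_le_of_lt h2 (hmono (mem_Ioi.mpr (half_pos hy)) (mem_Ioi.mpr hy) (half_lt_self hy))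

lemma neg_of_tendsto_zero {g : ℝ → ℝ} (hmono : StrictAntiOn g (Ioi 0))
    (hlim : Tendsto g (𝓝[>] (0:ℝ)) (𝓝 0)) : ∀ y, 0 < y → g y < 0 := by
  intro y hy
  have h2 : g (y / 2) ≤ 0 := by
    apply ge_of_tendsto hlim
    filter_upwards [Ioo_mem_nhdsGT_of_mem (⟨le_rfl, half_pos hy⟩ : (0:ℝ) ∈ Ico 0 (y/2))]
      with t ht
    exact (hmono (mem_Ioi.mpr ht.1) (mem_Ioi.mpr (half_pos hy)) ht.2).le
  exact lt_of_lt_of_le (hmono (mem_Ioi.mpr (half_pos hy)) (mem_Ioi.mpr hy) (half_lt_self hy)) h2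

-- continuity
lemma cont_rpow_p (hp : 0 < p) : Continuous fun y : ℝ => y ^ p :=
  continuous_iff_continuousAt.mpr fun y => Real.continuousAt_rpow_const y p (Or.inr hp.le)

lemma contOn_base_q (hp : 0 < p) (q : ℝ) :
    ContinuousOn (fun y : ℝ => (1 + y ^ p) ^ q) (Ici 0) := by
  intro y hy
  apply ContinuousWithinAt.mono _ (subset_univ _)
  apply ContinuousAt.continuousWithinAt
  exact ContinuousAt.comp (g := fun u : ℝ => u ^ q)
    (Real.continuousAt_rpow_const _ _ (Or.inl (base_pos hp hy).ne'))
    (continuousAt_const.add ((cont_rpow_p hp).continuousAt))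

lemma cont_arcsinhp (hp : 0 < p) : ContinuousOn (arcsinhp p) (Ici 0) := by
  intro y hy
  rcases eq_or_lt_of_le (mem_Ici.mp hy) with h | h
  · have : Tendsto (arcsinhp p) (𝓝[Ici 0] 0) (𝓝 0) := by
      apply squeeze_zero' (g := fun t : ℝ => t)
      · filter_upwards [eventually_mem_nhdsWithin] with t ht
        rcases eq_or_lt_of_le (mem_Ici.mp ht) with h' | h'
        · rw [← h', arcsinhp_zero]
        · exact (arcsinhp_pos hp h').le
      · filter_upwards [eventually_mem_nhdsWithin] with t ht
        rcases eq_or_lt_of_le (mem_Ici.mp ht) with h' | h'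
        · rw [← h', arcsinhp_zero]
        · exact (arcsinhp_lt hp h').le
      · exact tendsto_id.mono_left nhdsWithin_le_nhds
    rw [← h]
    unfold ContinuousWithinAt
    rw [arcsinhp_zero]
    exact this
  · exact ((hasDeriv_arcsinhp hp h).continuousAt).continuousWithinAt

end SinhpAux2

namespace SinhpAux3
open SinhpAux SinhpAux2

variable {p : ℝ}

lemma hd_base (hp : 0 < p) {y : ℝ} (hy : 0 < y) :
    HasDerivAt (fun y : ℝ => 1 + y ^ p) (p * y ^ (p - 1)) y :=
  (Real.hasDerivAt_rpow_const (Or.inl hy.ne')).const_add 1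

lemma hd_q (hp : 0 < p) (q : ℝ) {y : ℝ} (hy : 0 < y) :
    HasDerivAt (fun y : ℝ => (1 + y ^ p) ^ q)
      (p * y ^ (p - 1) * q * (1 + y ^ p) ^ (q - 1)) y :=
  (hd_base hp hy).rpow_const (Or.inl (base_pos hp hy.le).ne')

lemma lemV2 (hp : 2 ≤ p) : ∀ y, 0 < y →
    0 < arcsinhp p y * ((p^3 - p^2 + p + 1) + (p^3 - p) * y ^ p)
        - (p^3 - p^2 + p + 1) * (y * (1 + y ^ p) ^ ((p - 1) / p)) := by
  have hp0 : 0 < p := by linarith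
  apply pos_of_deriv_pos
    (G := fun y => ((1 + y ^ p) ^ (-1 / p) * ((p^3 - p^2 + p + 1) + (p^3 - p) * y ^ p)
        + arcsinhp p y * ((p^3 - p) * (p * y ^ (p - 1))))
      - (p^3 - p^2 + p + 1) * (1 * (1 + y ^ p) ^ ((p - 1) / p)
        + y * (p * y ^ (p - 1) * ((p - 1) / p) * (1 + y ^ p) ^ ((p - 1) / p - 1))))
  · apply ContinuousOn.sub
    · exact (cont_arcsinhp hp0).mul
        ((continuous_const.add (continuous_const.mul (cont_rpow_p hp0))).continuousOn)
    · exact continuousOn_const.mul (continuousOn_id.mul (contOn_base_q hp0 _))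
  · simp [arcsinhp_zero]
  · intro y hy
    exact (((hasDeriv_arcsinhp hp0 hy).mul
        (((Real.hasDerivAt_rpow_const (Or.inl hy.ne')).const_mul (p^3 - p)).const_add
          (p^3 - p^2 + p + 1))).sub
      (((hasDerivAt_id' y).mul (hd_q hp0 ((p-1)/p) hy)).const_mul (p^3 - p^2 + p + 1)))
  · intro y hy
    have hv := v_pos hp0 hy.le
    have hs : 0 < y ^ p := Real.rpow_pos_of_pos hy p
    have hxa : y * ((1 + y ^ p) ^ (1/p))⁻¹ < arcsinhp p y := by
      have := arcsinhp_gt hp0 hy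
      rwa [c_inv hp0 hy.le] at this
    have hqm : ((p - 1) / p - 1 : ℝ) = -1 / p := by field_simp; ring
    rw [c_inv hp0 hy.le, c_pm1 hp0 hy.le, hqm, c_inv hp0 hy.le, c_ym1 hy p]
    set x := arcsinhp p y with hxdef
    set v := (1 + y ^ p) ^ (1/p) with hvdef
    set s := y ^ p with hsdef
    have hyne : y ≠ 0 := hy.ne'
    have hvne : v ≠ 0 := hv.ne'
    have key : (v⁻¹ * ((p^3 - p^2 + p + 1) + (p^3 - p) * s)
        + x * ((p^3 - p) * (p * (s * y⁻¹))))
      - (p^3 - p^2 + p + 1) * (1 * ((1 + s) * v⁻¹)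
        + y * (p * (s * y⁻¹) * ((p - 1) / p) * v⁻¹))
      = s * v⁻¹ * ((p^3 - p) - (p^3 - p^2 + p + 1) * p)
        + (p^3 - p) * p * x * s * y⁻¹ := by
      field_simp
      ring
    rw [key]
    have hlow : (p^3 - p) * p * (y * v⁻¹) * s * y⁻¹ ≤ (p^3 - p) * p * x * s * y⁻¹ := by
      have hc : 0 < (p^3 - p) * p * s * y⁻¹ := by
        have : 0 < p^3 - p := by nlinarith
        positivity
      calc (p^3 - p) * p * (y * v⁻¹) * s * y⁻¹
          = (y * v⁻¹) * ((p^3 - p) * p * s * y⁻¹) := by ring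
        _ ≤ x * ((p^3 - p) * p * s * y⁻¹) := by
            exact mul_le_mul_of_nonneg_right hxa.le hc.le
        _ = (p^3 - p) * p * x * s * y⁻¹ := by ring
    have heq2 : (p^3 - p) * p * (y * v⁻¹) * s * y⁻¹ = (p^3 - p) * p * s * v⁻¹ := by
      field_simp
    have hfin : 0 < s * v⁻¹ * ((p^3 - p) - (p^3 - p^2 + p + 1) * p)
        + (p^3 - p) * p * s * v⁻¹ := by
      have hsv : 0 < s * v⁻¹ := by positivity
      have h2 : 0 < 2 * p * (p^2 - p - 1) := by nlinarith
      have heq : s * v⁻¹ * ((p^3 - p) - (p^3 - p^2 + p + 1) * p)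
          + (p^3 - p) * p * s * v⁻¹ = s * v⁻¹ * (2 * p * (p^2 - p - 1)) := by ring
      rw [heq]
      exact mul_pos hsv h2
    calc (0:ℝ) < s * v⁻¹ * ((p^3 - p) - (p^3 - p^2 + p + 1) * p)
        + (p^3 - p) * p * s * v⁻¹ := hfin
      _ = s * v⁻¹ * ((p^3 - p) - (p^3 - p^2 + p + 1) * p)
        + (p^3 - p) * p * (y * v⁻¹) * s * y⁻¹ := by rw [heq2]
      _ ≤ _ := by linarith [hlow]

lemma c_2inv (hp : 0 < p) {y : ℝ} (hy : 0 ≤ y) :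
    (1 + y ^ p) ^ (-(1/p + 1/p)) = ((1 + y ^ p) ^ (1/p) * (1 + y ^ p) ^ (1/p))⁻¹ := by
  rw [Real.rpow_neg (base_pos hp hy).le, Real.rpow_add (base_pos hp hy)]

lemma lemV (hp : 2 ≤ p) : ∀ y, 0 < y →
    0 < arcsinhp p y * ((1 + y ^ p) ^ (1/p) * ((p + 1) + p * (p - 1) * y ^ p))
        - y * ((p + 1) + (p^2 - p + 1) * y ^ p) := by
  have hp0 : 0 < p := by linarith
  apply pos_of_deriv_pos
    (G := fun y => ((1 + y ^ p) ^ (-1 / p) * ((1 + y ^ p) ^ (1/p) * ((p + 1) + p * (p - 1) * y ^ p))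
        + arcsinhp p y * ((p * y ^ (p - 1) * (1/p) * (1 + y ^ p) ^ (1/p - 1)) * ((p + 1) + p * (p - 1) * y ^ p)
          + (1 + y ^ p) ^ (1/p) * (p * (p - 1) * (p * y ^ (p - 1)))))
      - (1 * ((p + 1) + (p^2 - p + 1) * y ^ p)
        + y * ((p^2 - p + 1) * (p * y ^ (p - 1)))))
  · apply ContinuousOn.sub
    · exact (cont_arcsinhp hp0).mul ((contOn_base_q hp0 _).mul
        ((continuous_const.add (continuous_const.mul (cont_rpow_p hp0))).continuousOn))
    · exact continuousOn_id.mul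
        ((continuous_const.add (continuous_const.mul (cont_rpow_p hp0))).continuousOn)
  · simp [arcsinhp_zero]
  · intro y hy
    exact (((hasDeriv_arcsinhp hp0 hy).mul ((hd_q hp0 (1/p) hy).mul
        (((Real.hasDerivAt_rpow_const (Or.inl hy.ne')).const_mul (p * (p - 1))).const_add (p + 1)))).sub
      ((hasDerivAt_id' y).mul
        (((Real.hasDerivAt_rpow_const (Or.inl hy.ne')).const_mul (p^2 - p + 1)).const_add (p + 1))))
  · intro y hy
    have hv := v_pos hp0 hy.le
    have hs : 0 < y ^ p := Real.rpow_pos_of_pos hy p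
    have h1s : (0:ℝ) < 1 + y ^ p := base_pos hp0 hy.le
    have hV2 := lemV2 hp y hy
    rw [c_pm1 hp0 hy.le] at hV2
    rw [c_inv hp0 hy.le, c_q1 hp0 hy.le, c_ym1 hy p]
    set x := arcsinhp p y with hxdef
    set v := (1 + y ^ p) ^ (1/p) with hvdef
    set s := y ^ p with hsdef
    have hyne : y ≠ 0 := hy.ne'
    have hvne : v ≠ 0 := hv.ne'
    have h1sne : (1 + s) ≠ 0 := h1s.ne'
    have key : (v⁻¹ * (v * ((p + 1) + p * (p - 1) * s))
        + x * ((p * (s * y⁻¹) * (1/p) * (v * (1 + s)⁻¹)) * ((p + 1) + p * (p - 1) * s)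
          + v * (p * (p - 1) * (p * (s * y⁻¹)))))
      - (1 * ((p + 1) + (p^2 - p + 1) * s) + y * ((p^2 - p + 1) * (p * (s * y⁻¹))))
      = (s * y⁻¹ * v * (1 + s)⁻¹) * (x * ((p^3 - p^2 + p + 1) + (p^3 - p) * s))
        - (p^3 - p^2 + p + 1) * s := by
      field_simp
      ring
    rw [key]
    have hC : 0 < s * y⁻¹ * v * (1 + s)⁻¹ := by positivity
    have hstep : (s * y⁻¹ * v * (1 + s)⁻¹) * ((p^3 - p^2 + p + 1) * (y * ((1 + s) * v⁻¹)))
        = (p^3 - p^2 + p + 1) * s := by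
      field_simp
    nlinarith [mul_lt_mul_of_pos_left (sub_pos.mp hV2) hC]

lemma lemT (hp : 2 ≤ p) : ∀ y, 0 < y →
    0 < arcsinhp p y * arcsinhp p y
        + (p - 1) * (y * ((1 + y ^ p) ^ ((p - 1) / p) * arcsinhp p y))
        - p * (y * y * (1 + y ^ p) ^ ((p - 2) / p)) := by
  have hp0 : 0 < p := by linarith
  apply pos_of_deriv_pos
    (G := fun y => ((1 + y ^ p) ^ (-1 / p) * arcsinhp p y + arcsinhp p y * (1 + y ^ p) ^ (-1 / p)
        + (p - 1) * (1 * ((1 + y ^ p) ^ ((p - 1) / p) * arcsinhp p y)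
          + y * ((p * y ^ (p - 1) * ((p - 1) / p) * (1 + y ^ p) ^ ((p - 1) / p - 1)) * arcsinhp p y
            + (1 + y ^ p) ^ ((p - 1) / p) * (1 + y ^ p) ^ (-1 / p))))
      - p * ((1 * y + y * 1) * (1 + y ^ p) ^ ((p - 2) / p)
        + y * y * (p * y ^ (p - 1) * ((p - 2) / p) * (1 + y ^ p) ^ ((p - 2) / p - 1))))
  · apply ContinuousOn.sub
    · apply ContinuousOn.add
      · exact (cont_arcsinhp hp0).mul (cont_arcsinhp hp0)
      · exact continuousOn_const.mul (continuousOn_id.mul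
          ((contOn_base_q hp0 _).mul (cont_arcsinhp hp0)))
    · exact continuousOn_const.mul ((continuousOn_id.mul continuousOn_id).mul (contOn_base_q hp0 _))
  · simp [arcsinhp_zero]
  · intro y hy
    exact ((((hasDeriv_arcsinhp hp0 hy).mul (hasDeriv_arcsinhp hp0 hy)).add
        (((hasDerivAt_id' y).mul ((hd_q hp0 ((p-1)/p) hy).mul (hasDeriv_arcsinhp hp0 hy))).const_mul (p - 1))).sub
      ((((hasDerivAt_id' y).mul (hasDerivAt_id' y)).mul (hd_q hp0 ((p-2)/p) hy)).const_mul p))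
  · intro y hy
    have hv := v_pos hp0 hy.le
    have hs : 0 < y ^ p := Real.rpow_pos_of_pos hy p
    have h1s : (0:ℝ) < 1 + y ^ p := base_pos hp0 hy.le
    have hV := lemV hp y hy
    have hqm1 : ((p - 1) / p - 1 : ℝ) = -1 / p := by field_simp; ring
    have hqm2 : ((p - 2) / p - 1 : ℝ) = -(1/p + 1/p) := by field_simp; ring
    rw [hqm1, hqm2, c_2inv hp0 hy.le, c_inv hp0 hy.le, c_pm1 hp0 hy.le, c_pm2 hp0 hy.le, c_ym1 hy p]
    set x := arcsinhp p y with hxdef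
    set v := (1 + y ^ p) ^ (1/p) with hvdef
    set s := y ^ p with hsdef
    have hyne : y ≠ 0 := hy.ne'
    have hvne : v ≠ 0 := hv.ne'
    have h1sne : (1 + s) ≠ 0 := h1s.ne'
    have key : (v⁻¹ * x + x * v⁻¹
        + (p - 1) * (1 * ((1 + s) * v⁻¹ * x)
          + y * ((p * (s * y⁻¹) * ((p - 1) / p) * v⁻¹) * x + (1 + s) * v⁻¹ * v⁻¹)))
      - p * ((1 * y + y * 1) * ((1 + s) * (v * v)⁻¹)
        + y * y * (p * (s * y⁻¹) * ((p - 2) / p) * (v * v)⁻¹))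
      = (v * v)⁻¹ * (x * (v * ((p + 1) + p * (p - 1) * s))
          - y * ((p + 1) + (p^2 - p + 1) * s)) := by
      field_simp
      ring
    rw [key]
    positivity

lemma lemB (hp : 2 ≤ p) : ∀ y, 0 < y →
    (p + 1) * ((1 + y ^ p) ^ (1/p) * arcsinhp p y - y) - y * (arcsinhp p y) ^ p < 0 := by
  have hp0 : 0 < p := by linarith
  apply neg_of_deriv_neg
    (G := fun y => (p + 1) * ((p * y ^ (p - 1) * (1/p) * (1 + y ^ p) ^ (1/p - 1)) * arcsinhp p y
        + (1 + y ^ p) ^ (1/p) * (1 + y ^ p) ^ (-1 / p) - 1)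
      - (1 * (arcsinhp p y) ^ p
        + y * ((1 + y ^ p) ^ (-1 / p) * p * (arcsinhp p y) ^ (p - 1))))
  · apply ContinuousOn.sub
    · exact continuousOn_const.mul (((contOn_base_q hp0 _).mul (cont_arcsinhp hp0)).sub
        continuousOn_id)
    · exact continuousOn_id.mul ((cont_rpow_p hp0).comp_continuousOn (cont_arcsinhp hp0))
  · simp [arcsinhp_zero, Real.zero_rpow hp0.ne']
  · intro y hy
    have hx0 : 0 < arcsinhp p y := arcsinhp_pos hp0 hy
    exact ((((hd_q hp0 (1/p) hy).mul (hasDeriv_arcsinhp hp0 hy)).sub (hasDerivAt_id' y)).const_mul (p+1)).sub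
      ((hasDerivAt_id' y).mul ((hasDeriv_arcsinhp hp0 hy).rpow_const (Or.inl hx0.ne')))
  · intro y hy
    have hv := v_pos hp0 hy.le
    have hs : 0 < y ^ p := Real.rpow_pos_of_pos hy p
    have h1s : (0:ℝ) < 1 + y ^ p := base_pos hp0 hy.le
    have hx0 : 0 < arcsinhp p y := arcsinhp_pos hp0 hy
    have hxa : y * ((1 + y ^ p) ^ (1/p))⁻¹ < arcsinhp p y := by
      have := arcsinhp_gt hp0 hy
      rwa [c_inv hp0 hy.le] at this
    rw [c_inv hp0 hy.le, c_q1 hp0 hy.le, c_ym1 hy p]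
    set x := arcsinhp p y with hxdef
    set v := (1 + y ^ p) ^ (1/p) with hvdef
    set s := y ^ p with hsdef
    have hyne : y ≠ 0 := hy.ne'
    have hvne : v ≠ 0 := hv.ne'
    have h1sne : (1 + s) ≠ 0 := h1s.ne'
    -- abbreviations for rpow of x and a
    have hxp : x ^ p = x ^ (p - 2) * x * x := by
      rw [show x ^ (p - 2) * x * x = x ^ ((p - 2) + 1 + 1) by
        rw [Real.rpow_add hx0, Real.rpow_add hx0, Real.rpow_one],
        show (p - 2) + 1 + 1 = p by ring]
    have hxp1 : x ^ (p - 1) = x ^ (p - 2) * x := by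
      rw [show x ^ (p - 2) * x = x ^ ((p - 2) + 1) by
        rw [Real.rpow_add hx0, Real.rpow_one], show (p - 2) + 1 = p - 1 by ring]
    -- the a^{p-1} coefficient
    have ha0 : 0 < y * v⁻¹ := by positivity
    have hap2 : (y * v⁻¹) ^ (p - 2) ≤ x ^ (p - 2) :=
      Real.rpow_le_rpow ha0.le hxa.le (by linarith)
    have hX : (0:ℝ) < x ^ (p - 2) := Real.rpow_pos_of_pos hx0 _
    have hcoef : s * y⁻¹ * (v * (1 + s)⁻¹) = (y * v⁻¹) ^ (p - 2) * (y * v⁻¹) := by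
      have h1 : (y * v⁻¹) ^ (p - 2) * (y * v⁻¹) = (y * v⁻¹) ^ (p - 1) := by
        rw [show (y * v⁻¹) ^ (p - 2) * (y * v⁻¹) = (y * v⁻¹) ^ ((p - 2) + 1) by
          rw [Real.rpow_add ha0, Real.rpow_one], show (p - 2) + 1 = p - 1 by ring]
      have h2 : (y * v⁻¹) ^ (p - 1) = y ^ (p - 1) * (v⁻¹) ^ (p - 1) :=
        Real.mul_rpow hy.le (by positivity)
      have h3 : (v⁻¹ : ℝ) ^ (p - 1) = (v ^ (p - 1))⁻¹ := Real.inv_rpow hv.le _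
      have h4 : v ^ (p - 1) = (1 + s) * v⁻¹ := by
        rw [hvdef, ← Real.rpow_mul h1s.le, show 1/p * (p - 1) = 1 - 1/p by field_simp,
          Real.rpow_sub h1s, Real.rpow_one, div_eq_mul_inv]
      rw [h1, h2, h3, h4, c_ym1 hy p]
      rw [mul_inv_rev, inv_inv]
    have hsimp : p * (s * y⁻¹) * (1/p) * (v * (1 + s)⁻¹) = s * y⁻¹ * (v * (1 + s)⁻¹) := by
      field_simp
    rw [hsimp, hcoef, hxp, hxp1, mul_inv_cancel₀ hvne]
    have f1 : (y * v⁻¹) ^ (p - 2) * ((y * v⁻¹) * x) ≤ x ^ (p - 2) * ((y * v⁻¹) * x) :=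
      mul_le_mul_of_nonneg_right hap2 (by positivity)
    have f3 : x ^ (p - 2) * ((y * v⁻¹) * x) < x ^ (p - 2) * (x * x) := by
      apply mul_lt_mul_of_pos_left _ hX
      exact mul_lt_mul_of_pos_right hxa hx0
    nlinarith [f1, f3, hp, mul_le_mul_of_nonneg_left f1 hp0.le,
      mul_lt_mul_of_pos_left f3 hp0]

lemma lim_ratio (hp : 0 < p) :
    Tendsto (fun y => arcsinhp p y / y) (𝓝[>] (0:ℝ)) (𝓝 1) := by
  have hlow : Tendsto (fun y : ℝ => (1 + y ^ p) ^ (-1/p)) (𝓝[>] (0:ℝ)) (𝓝 1) := by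
    have h0 : ContinuousAt (fun y : ℝ => (1 + y ^ p) ^ (-1/p)) 0 :=
      integrand_contAt hp (le_refl 0)
    have hval : ((1:ℝ) + (0:ℝ) ^ p) ^ (-1/p) = 1 := by
      rw [Real.zero_rpow hp.ne', add_zero, Real.one_rpow]
    have h2 := h0.tendsto
    rw [hval] at h2
    exact h2.mono_left nhdsWithin_le_nhds
  apply tendsto_of_tendsto_of_tendsto_of_le_of_le' hlow tendsto_const_nhds
  · filter_upwards [self_mem_nhdsWithin] with y hy
    rw [mem_Ioi] at hy
    have h := arcsinhp_gt hp hy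
    rw [le_div_iff₀ hy]
    rw [show (1 + y ^ p) ^ (-1/p) * y = y * (1 + y ^ p) ^ (-1 / p) by rw [neg_div]; ring]
    exact h.le
  · filter_upwards [self_mem_nhdsWithin] with y hy
    rw [mem_Ioi] at hy
    exact (div_le_one hy).mpr (arcsinhp_lt hp hy).le

lemma lim_logdiff (hp : 0 < p) :
    Tendsto (fun y => Real.log y - Real.log (arcsinhp p y)) (𝓝[>] (0:ℝ)) (𝓝 0) := by
  have h1 : Tendsto (fun y => Real.log (arcsinhp p y / y)) (𝓝[>] (0:ℝ)) (𝓝 0) := by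
    have := (Real.continuousAt_log one_ne_zero).tendsto.comp (lim_ratio hp)
    simpa [Function.comp_def] using this
  have h2 : Tendsto (fun y => -Real.log (arcsinhp p y / y)) (𝓝[>] (0:ℝ)) (𝓝 0) := by
    simpa using h1.neg
  apply h2.congr'
  filter_upwards [self_mem_nhdsWithin] with y hy
  rw [mem_Ioi] at hy
  rw [Real.log_div (arcsinhp_pos hp hy).ne' hy.ne']
  ring

lemma lim_x (hp : 0 < p) : Tendsto (arcsinhp p) (𝓝[>] (0:ℝ)) (𝓝 0) := by
  apply squeeze_zero' (g := fun y : ℝ => y)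
  · filter_upwards [self_mem_nhdsWithin] with t ht
    exact (arcsinhp_pos hp (mem_Ioi.mp ht)).le
  · filter_upwards [self_mem_nhdsWithin] with t ht
    exact (arcsinhp_lt hp (mem_Ioi.mp ht)).le
  · exact tendsto_id.mono_left nhdsWithin_le_nhds

lemma lim_xp (hp : 0 < p) :
    Tendsto (fun y => (arcsinhp p y) ^ p) (𝓝[>] (0:ℝ)) (𝓝 0) := by
  have hc : ContinuousAt (fun u : ℝ => u ^ p) 0 :=
    Real.continuousAt_rpow_const 0 p (Or.inr hp.le)
  have := hc.tendsto.comp (lim_x hp)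
  simpa [Real.zero_rpow hp.ne', Function.comp_def] using this

lemma lim_v (hp : 0 < p) :
    Tendsto (fun y : ℝ => (1 + y ^ p) ^ (1/p)) (𝓝[>] (0:ℝ)) (𝓝 1) := by
  have h1 : ContinuousAt (fun y : ℝ => 1 + y ^ p) 0 :=
    continuousAt_const.add (Real.continuousAt_rpow_const 0 p (Or.inr hp.le))
  have h0 : ContinuousAt (fun y : ℝ => (1 + y ^ p) ^ (1/p)) 0 := by
    apply ContinuousAt.comp (g := fun u : ℝ => u ^ (1/p)) _ h1
    apply Real.continuousAt_rpow_const
    left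
    simp [Real.zero_rpow hp.ne']
  have hval : ((1:ℝ) + (0:ℝ) ^ p) ^ (1/p) = 1 := by
    rw [Real.zero_rpow hp.ne', add_zero, Real.one_rpow]
  have h2 := h0.tendsto
  rw [hval] at h2
  exact h2.mono_left nhdsWithin_le_nhds

lemma lemF (hp : 2 ≤ p) : ∀ y, 0 < y →
    Real.log y - Real.log (arcsinhp p y) - (arcsinhp p y) ^ p / (p * (p + 1)) < 0 := by
  have hp0 : 0 < p := by linarith
  have hderiv : ∀ y, 0 < y → HasDerivAt
      (fun y => Real.log y - Real.log (arcsinhp p y) - (arcsinhp p y) ^ p / (p * (p + 1)))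
      (y⁻¹ - (1 + y ^ p) ^ (-1 / p) / arcsinhp p y
        - ((1 + y ^ p) ^ (-1 / p) * p * (arcsinhp p y) ^ (p - 1)) / (p * (p + 1))) y := by
    intro y hy
    have hx0 : 0 < arcsinhp p y := arcsinhp_pos hp0 hy
    exact ((Real.hasDerivAt_log hy.ne').sub ((hasDeriv_arcsinhp hp0 hy).log hx0.ne')).sub
      (((hasDeriv_arcsinhp hp0 hy).rpow_const (Or.inl hx0.ne')).div_const (p * (p + 1)))
  have hanti : StrictAntiOn
      (fun y => Real.log y - Real.log (arcsinhp p y) - (arcsinhp p y) ^ p / (p * (p + 1)))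
      (Ioi 0) := by
    apply strictAntiOn_of_deriv_neg (convex_Ioi 0)
    · intro y hy
      exact ((hderiv y (mem_Ioi.mp hy)).continuousAt).continuousWithinAt
    · intro y hy
      rw [interior_Ioi, mem_Ioi] at hy
      rw [(hderiv y hy).deriv]
      have hv := v_pos hp0 hy.le
      have hx0 : 0 < arcsinhp p y := arcsinhp_pos hp0 hy
      have hB := lemB hp y hy
      rw [c_inv hp0 hy.le]
      set x := arcsinhp p y with hxdef
      set v := (1 + y ^ p) ^ (1/p) with hvdef
      have hxp1 : x ^ (p - 1) = x ^ p * x⁻¹ := by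
        rw [Real.rpow_sub hx0, Real.rpow_one, div_eq_mul_inv]
      have key : y⁻¹ - v⁻¹ / x - (v⁻¹ * p * x ^ (p - 1)) / (p * (p + 1))
          = ((p + 1) * (v * x - y) - y * x ^ p) * (y * x * v * (p + 1))⁻¹ := by
        rw [hxp1]
        field_simp
      rw [key]
      exact mul_neg_of_neg_of_pos hB (by positivity)
  apply neg_of_tendsto_zero hanti
  have := (lim_logdiff hp0).sub ((lim_xp hp0).div_const (p * (p + 1)))
  simpa using this

lemma lemE (hp : 2 ≤ p) : ∀ y, 0 < y →
    0 < p * (Real.log y - Real.log (arcsinhp p y))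
      - (1 + y ^ p) ^ (1/p) * arcsinhp p y / y + 1 := by
  have hp0 : 0 < p := by linarith
  have hderiv : ∀ y, 0 < y → HasDerivAt
      (fun y => p * (Real.log y - Real.log (arcsinhp p y))
        - (1 + y ^ p) ^ (1/p) * arcsinhp p y / y + 1)
      (p * (y⁻¹ - (1 + y ^ p) ^ (-1 / p) / arcsinhp p y)
        - (((p * y ^ (p - 1) * (1/p) * (1 + y ^ p) ^ (1/p - 1)) * arcsinhp p y
            + (1 + y ^ p) ^ (1/p) * (1 + y ^ p) ^ (-1 / p)) * y
          - (1 + y ^ p) ^ (1/p) * arcsinhp p y * 1) / y ^ 2) y := by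
    intro y hy
    have hx0 : 0 < arcsinhp p y := arcsinhp_pos hp0 hy
    exact ((((Real.hasDerivAt_log hy.ne').sub
        ((hasDeriv_arcsinhp hp0 hy).log hx0.ne')).const_mul p).sub
      (((hd_q hp0 (1/p) hy).mul (hasDeriv_arcsinhp hp0 hy)).div (hasDerivAt_id' y) hy.ne')).add_const 1
  have hmono : StrictMonoOn
      (fun y => p * (Real.log y - Real.log (arcsinhp p y))
        - (1 + y ^ p) ^ (1/p) * arcsinhp p y / y + 1) (Ioi 0) := by
    apply strictMonoOn_of_deriv_pos (convex_Ioi 0)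
    · intro y hy
      exact ((hderiv y (mem_Ioi.mp hy)).continuousAt).continuousWithinAt
    · intro y hy
      rw [interior_Ioi, mem_Ioi] at hy
      rw [(hderiv y hy).deriv]
      have hv := v_pos hp0 hy.le
      have hs : 0 < y ^ p := Real.rpow_pos_of_pos hy p
      have h1s : (0:ℝ) < 1 + y ^ p := base_pos hp0 hy.le
      have hx0 : 0 < arcsinhp p y := arcsinhp_pos hp0 hy
      have hT := lemT hp y hy
      rw [c_pm1 hp0 hy.le, c_pm2 hp0 hy.le] at hT
      rw [c_inv hp0 hy.le, c_q1 hp0 hy.le, c_ym1 hy p]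
      set x := arcsinhp p y with hxdef
      set v := (1 + y ^ p) ^ (1/p) with hvdef
      set s := y ^ p with hsdef
      have key : p * (y⁻¹ - v⁻¹ / x)
          - (((p * (s * y⁻¹) * (1/p) * (v * (1 + s)⁻¹)) * x + v * v⁻¹) * y - v * x * 1) / y ^ 2
        = (v * (y ^ 2 * x * (1 + s))⁻¹)
            * (x * x + (p - 1) * (y * ((1 + s) * v⁻¹ * x)) - p * (y * y * ((1 + s) * (v * v)⁻¹))) := by
        field_simp
        ring
      rw [key]
      exact mul_pos (by positivity) hT
  apply pos_of_tendsto_zero hmono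
  have hvx : Tendsto (fun y => (1 + y ^ p) ^ (1/p) * arcsinhp p y / y) (𝓝[>] (0:ℝ)) (𝓝 1) := by
    have := (lim_v hp0).mul (lim_ratio hp0)
    simp only [mul_one] at this
    apply this.congr
    intro y
    ring
  have := (((lim_logdiff hp0).const_mul p).sub hvx).add_const 1
  simpa using this

lemma lemH (hp : 2 ≤ p) : StrictAntiOn
    (fun y => (Real.log y - Real.log (arcsinhp p y)) / (arcsinhp p y) ^ p) (Ioi 0) := by
  have hp0 : 0 < p := by linarith
  have hderiv : ∀ y, 0 < y → HasDerivAt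
      (fun y => (Real.log y - Real.log (arcsinhp p y)) / (arcsinhp p y) ^ p)
      (((y⁻¹ - (1 + y ^ p) ^ (-1 / p) / arcsinhp p y) * (arcsinhp p y) ^ p
        - (Real.log y - Real.log (arcsinhp p y))
          * ((1 + y ^ p) ^ (-1 / p) * p * (arcsinhp p y) ^ (p - 1)))
        / ((arcsinhp p y) ^ p) ^ 2) y := by
    intro y hy
    have hx0 : 0 < arcsinhp p y := arcsinhp_pos hp0 hy
    have hxp : (arcsinhp p y) ^ p ≠ 0 := (Real.rpow_pos_of_pos hx0 p).ne'
    exact ((Real.hasDerivAt_log hy.ne').sub ((hasDeriv_arcsinhp hp0 hy).log hx0.ne')).div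
      ((hasDeriv_arcsinhp hp0 hy).rpow_const (Or.inl hx0.ne')) hxp
  apply strictAntiOn_of_deriv_neg (convex_Ioi 0)
  · intro y hy
    exact ((hderiv y (mem_Ioi.mp hy)).continuousAt).continuousWithinAt
  · intro y hy
    rw [interior_Ioi, mem_Ioi] at hy
    rw [(hderiv y hy).deriv]
    have hv := v_pos hp0 hy.le
    have hx0 : 0 < arcsinhp p y := arcsinhp_pos hp0 hy
    have hxp : 0 < (arcsinhp p y) ^ p := Real.rpow_pos_of_pos hx0 p
    have hE := lemE hp y hy
    rw [c_inv hp0 hy.le]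
    set x := arcsinhp p y with hxdef
    set v := (1 + y ^ p) ^ (1/p) with hvdef
    apply div_neg_of_neg_of_pos
    · have hxp1 : x ^ (p - 1) = x ^ p * x⁻¹ := by
        rw [Real.rpow_sub hx0, Real.rpow_one, div_eq_mul_inv]
      have key : (y⁻¹ - v⁻¹ / x) * x ^ p
            - (Real.log y - Real.log x) * (v⁻¹ * p * x ^ (p - 1))
          = ((x * v - y - p * (Real.log y - Real.log x) * y) * (x ^ p * x⁻¹)) * (y * v)⁻¹ := by
        rw [hxp1]
        field_simp
      rw [key]
      have hfac : x * v - y - p * (Real.log y - Real.log x) * y < 0 := by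
        have h1 := mul_pos hE hy
        have h2 : (p * (Real.log y - Real.log x) - v * x / y + 1) * y
            = p * (Real.log y - Real.log x) * y - v * x + y := by
          field_simp
        rw [h2] at h1
        nlinarith [h1]
      apply mul_neg_of_neg_of_pos
      · apply mul_neg_of_neg_of_pos hfac
        positivity
      · positivity
    · positivity

end SinhpAux3

open SinhpAux SinhpAux2 SinhpAux3

/-- For `p ≥ 2`, `exp(λ x^p) < x/sinhₚ x < exp(η x^p)` on `(0, c)`, with
`λ = −1/(p(p+1))`, `η = ln(c/sinhₚ c)/c^p`, stated via `y = sinhₚ x`, `x = arcsinhₚ y`. -/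
theorem exp_bounds_div_sinhp (p : ℝ) (hp : 2 ≤ p) (y₀ : ℝ) (hy₀ : 0 < y₀)
    (c lam η : ℝ) (hc : c = arcsinhp p y₀)
    (hlam : lam = -1 / (p * (p + 1)))
    (hη : η = Real.log (c / y₀) / c ^ p) :
    ∀ y ∈ Set.Ioo 0 y₀,
      Real.exp (lam * arcsinhp p y ^ p) < arcsinhp p y / y ∧
      arcsinhp p y / y < Real.exp (η * arcsinhp p y ^ p) := by
  have hp0 : 0 < p := by linarith
  rintro y ⟨hy0, hyy₀⟩
  have hx0 : 0 < arcsinhp p y := arcsinhp_pos hp0 hy0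
  have hc0 : 0 < c := by rw [hc]; exact arcsinhp_pos hp0 hy₀
  have hxp : 0 < arcsinhp p y ^ p := Real.rpow_pos_of_pos hx0 p
  have hcp : 0 < c ^ p := Real.rpow_pos_of_pos hc0 p
  have hdiv : 0 < arcsinhp p y / y := div_pos hx0 hy0
  constructor
  · rw [hlam]
    rw [← Real.lt_log_iff_exp_lt hdiv]
    rw [Real.log_div hx0.ne' hy0.ne']
    have hF := lemF hp y hy0
    have : (-1 / (p * (p + 1))) * arcsinhp p y ^ p
        = -(arcsinhp p y ^ p / (p * (p + 1))) := by ring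
    rw [this]
    linarith
  · rw [hη]
    rw [← Real.log_lt_iff_lt_exp hdiv]
    rw [Real.log_div hx0.ne' hy0.ne']
    have hH := lemH hp (mem_Ioi.mpr hy0) (mem_Ioi.mpr (lt_trans hy0 hyy₀)) hyy₀
    set x := arcsinhp p y
    set L := Real.log y - Real.log x with hL
    have hH' : (Real.log y₀ - Real.log c) / c ^ p < L / x ^ p := by
      rw [hc]
      simpa using hH
    have h1 : ((Real.log y₀ - Real.log c) / c ^ p) * x ^ p < L := by
      have := (div_lt_div_iff₀ hcp hxp).mp hH'
      calc ((Real.log y₀ - Real.log c) / c ^ p) * x ^ p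
          = ((Real.log y₀ - Real.log c) * x ^ p) / c ^ p := by ring
        _ < L := by
            rw [div_lt_iff₀ hcp]
            linarith [this]
    have hlogc : Real.log (c / y₀) = Real.log c - Real.log y₀ :=
      Real.log_div hc0.ne' hy₀.ne'
    rw [hlogc]
    have hneg : (Real.log c - Real.log y₀) / c ^ p * x ^ p
        = -(((Real.log y₀ - Real.log c) / c ^ p) * x ^ p) := by ring
    linarith [h1, hneg.ge, hneg.le]
end

section
/- Let p > 1 be a real number, fix y₀ > 0, and set d = arcsinhₚ(y₀), λ₁ = ln((1 + y₀^p)^(1/p))/d^p and η₁ = 1/p. Then for every y ∈ (0, y₀), writing x = arcsinhₚ(y), one has exp(λ₁·x^p) < (1 + y^p)^(1/p) < exp(η₁·x^p). (This is the double inequality exp(λ₁ x^p) < coshₚ(x) < exp(η₁ x^p) for x ∈ (0, d), with λ₁ = ln(coshₚ d)/d^p.) -/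
open Real Set MeasureTheory

section Aux

variable {p : ℝ}

lemma upos (hp : 1 < p) {y : ℝ} (hy : 0 ≤ y) : (0:ℝ) < 1 + y ^ p := by
  have := Real.rpow_nonneg hy p; linarith

lemma contf (hp : 1 < p) {t : ℝ} (ht : 0 ≤ t) :
    ContinuousAt (fun t : ℝ => (1 + t ^ p) ^ (-1 / p)) t := by
  have h1 : ContinuousAt (fun t : ℝ => 1 + t ^ p) t :=
    continuousAt_const.add (Real.continuousAt_rpow_const t p (Or.inr (by linarith)))
  exact h1.rpow_const (Or.inl (ne_of_gt (upos hp ht)))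

lemma intf (hp : 1 < p) {b : ℝ} (hb : 0 ≤ b) :
    IntervalIntegrable (fun t : ℝ => (1 + t ^ p) ^ (-1 / p)) volume 0 b := by
  apply ContinuousOn.intervalIntegrable
  intro t ht
  rw [uIcc_of_le hb] at ht
  exact (contf hp ht.1).continuousWithinAt

lemma arcsinhp_zero : arcsinhp p 0 = 0 := intervalIntegral.integral_same

lemma hasDerivAt_arcsinhp (hp : 1 < p) {y : ℝ} (hy : 0 < y) :
    HasDerivAt (arcsinhp p) ((1 + y ^ p) ^ (-1 / p)) y := by
  apply intervalIntegral.integral_hasDerivAt_right (intf hp hy.le)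
  · exact ContinuousAt.stronglyMeasurableAtFilter isOpen_Ioi
      (fun x hx => contf hp (le_of_lt hx)) y hy
  · exact contf hp hy.le

lemma cont_arcsinhp (hp : 1 < p) {b : ℝ} (hb : 0 ≤ b) :
    ContinuousOn (arcsinhp p) (Icc 0 b) := by
  have : ContinuousOn (arcsinhp p) (uIcc 0 b) := by
    apply intervalIntegral.continuousOn_primitive_interval
    rw [uIcc_of_le hb]
    exact (intervalIntegrable_iff_integrableOn_Icc_of_le hb).mp (intf hp hb)
  rwa [uIcc_of_le hb] at this

lemma pos_at_right {F : ℝ → ℝ} {b : ℝ} (hb : 0 < b)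
    (hcont : ContinuousOn F (Icc 0 b)) (h0 : F 0 = 0)
    (hder : ∀ x ∈ Ioo 0 b, ∃ F', HasDerivAt F F' x ∧ 0 < F') : 0 < F b := by
  have hm : StrictMonoOn F (Icc 0 b) := by
    apply strictMonoOn_of_deriv_pos (convex_Icc 0 b) hcont
    intro x hx
    rw [interior_Icc] at hx
    obtain ⟨F', h1, h2⟩ := hder x hx
    rwa [h1.deriv]
  have h2 := hm (left_mem_Icc.mpr hb.le) (right_mem_Icc.mpr hb.le) hb
  rw [h0] at h2; exact h2

lemma L0 (hp : 1 < p) {y : ℝ} (hy : 0 < y) :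
    y * (1 + y ^ p) ^ (-1 / p) < arcsinhp p y := by
  have key : 0 < arcsinhp p y - y * (1 + y ^ p) ^ (-1 / p) := by
    apply pos_at_right hy
    · exact (cont_arcsinhp hp hy.le).sub
        (fun x hx => (continuousAt_id.mul (contf hp hx.1)).continuousWithinAt)
    · simp [arcsinhp_zero]
    · intro x hx
      obtain ⟨hx0, _⟩ := hx
      have hu : (0:ℝ) < 1 + x ^ p := upos hp hx0.le
      have hB : HasDerivAt (fun x : ℝ => x ^ p) (p * x ^ (p - 1)) x :=
        Real.hasDerivAt_rpow_const (Or.inl hx0.ne')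
      have hu' : HasDerivAt (fun x : ℝ => 1 + x ^ p) (p * x ^ (p - 1)) x := hB.const_add 1
      have hA : HasDerivAt (fun x : ℝ => (1 + x ^ p) ^ (-1 / p))
          (p * x ^ (p - 1) * (-1 / p) * (1 + x ^ p) ^ (-1 / p - 1)) x :=
        hu'.rpow_const (Or.inl hu.ne')
      have hxA := (hasDerivAt_id x).mul hA
      refine ⟨_, (hasDerivAt_arcsinhp hp hx0).sub hxA, ?_⟩
      have hD : p * x ^ (p - 1) * (-1 / p) * (1 + x ^ p) ^ (-1 / p - 1) < 0 := by
        have h1 : 0 < p * x ^ (p - 1) := by positivity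
        have h2 : 0 < (1 + x ^ p) ^ (-1 / p - 1) := Real.rpow_pos_of_pos hu _
        have h3 : -1 / p < 0 := by
          apply div_neg_of_neg_of_pos <;> linarith
        exact mul_neg_of_neg_of_pos (mul_neg_of_pos_of_neg h1 h3) h2
      simp only [id_eq]
      nlinarith [mul_neg_of_pos_of_neg hx0 hD]
  linarith

lemma arcsinhp_pos (hp : 1 < p) {y : ℝ} (hy : 0 < y) : 0 < arcsinhp p y := by
  have := L0 hp hy
  have h2 : 0 < y * (1 + y ^ p) ^ (-1 / p) := by
    have := Real.rpow_pos_of_pos (upos hp hy.le) (-1 / p)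
    positivity
  linarith

end Aux

section Main

variable {p : ℝ}

lemma xp_split {x : ℝ} (hx0 : 0 < x) : x * x ^ (p - 1) = x ^ p := by
  nth_rewrite 1 [← Real.rpow_one x]
  rw [← Real.rpow_add hx0]; ring_nf

lemma L1 (hp : 1 < p) {y : ℝ} (hy : 0 < y) :
    arcsinhp p y < y * (1 + y ^ p) ^ (-1 / p) * (1 + Real.log (1 + y ^ p)) := by
  have key : 0 < (fun x : ℝ => x * (1 + x ^ p) ^ (-1 / p) * (1 + Real.log (1 + x ^ p))
      - arcsinhp p x) y := by
    apply pos_at_right hy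
    · apply ContinuousOn.sub _ (cont_arcsinhp hp hy.le)
      intro x hx
      have h1 : ContinuousAt (fun x : ℝ => 1 + x ^ p) x :=
        continuousAt_const.add (Real.continuousAt_rpow_const x p (Or.inr (by linarith)))
      exact ((continuousAt_id.mul (contf hp hx.1)).mul
        (continuousAt_const.add (h1.log (ne_of_gt (upos hp hx.1))))).continuousWithinAt
    · simp [arcsinhp_zero]
    · intro x hx
      obtain ⟨hx0, _⟩ := hx
      have hu : (0:ℝ) < 1 + x ^ p := upos hp hx0.le
      have hp0 : p ≠ 0 := by positivity
      have hB : HasDerivAt (fun x : ℝ => x ^ p) (p * x ^ (p - 1)) x :=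
        Real.hasDerivAt_rpow_const (Or.inl hx0.ne')
      have hu' : HasDerivAt (fun x : ℝ => 1 + x ^ p) (p * x ^ (p - 1)) x := hB.const_add 1
      have hA : HasDerivAt (fun x : ℝ => (1 + x ^ p) ^ (-1 / p))
          (p * x ^ (p - 1) * (-1 / p) * (1 + x ^ p) ^ (-1 / p - 1)) x :=
        hu'.rpow_const (Or.inl hu.ne')
      have hxA := (hasDerivAt_id x).mul hA
      have hlog : HasDerivAt (fun x : ℝ => 1 + Real.log (1 + x ^ p))
          (p * x ^ (p - 1) / (1 + x ^ p)) x := (hu'.log hu.ne').const_add 1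
      refine ⟨_, (hxA.mul hlog).sub (hasDerivAt_arcsinhp hp hx0), ?_⟩
      simp only [id_eq, Pi.mul_apply]
      have e2 : (1 + x ^ p) ^ (-1 / p - 1) = (1 + x ^ p) ^ (-1 / p) / (1 + x ^ p) := by
        rw [Real.rpow_sub hu, Real.rpow_one]
      rw [e2, ← xp_split hx0] at *
      have hBpos : 0 < x ^ (p - 1) := Real.rpow_pos_of_pos hx0 _
      have hApos : 0 < (1 + x * x ^ (p - 1)) ^ (-1 / p) := Real.rpow_pos_of_pos hu _
      have hL : 0 < Real.log (1 + x * x ^ (p - 1)) := by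
        apply Real.log_pos; nlinarith
      have keyeq : ((1 : ℝ) * (1 + x * x ^ (p-1)) ^ (-1/p)
            + x * (p * x ^ (p-1) * (-1/p) * ((1 + x * x ^ (p-1)) ^ (-1/p) / (1 + x * x ^ (p-1)))))
            * (1 + Real.log (1 + x * x ^ (p-1)))
            + x * (1 + x * x ^ (p-1)) ^ (-1/p) * (p * x ^ (p-1) / (1 + x * x ^ (p-1)))
            - (1 + x * x ^ (p-1)) ^ (-1/p)
          = ((1 + x * x ^ (p-1)) ^ (-1/p) / (1 + x * x ^ (p-1)))
            * (Real.log (1 + x * x ^ (p-1)) + (p - 1) * (x * x ^ (p-1))) := by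
        field_simp
        ring
      have hsum : 0 < Real.log (1 + x * x ^ (p-1)) + (p - 1) * (x * x ^ (p-1)) := by
        nlinarith [mul_pos (sub_pos.mpr hp) (mul_pos hx0 hBpos)]
      linarith [keyeq, mul_pos (div_pos hApos hu) hsum]
  simpa using key


lemma L2 (hp : 1 < p) {y : ℝ} (hy : 0 < y) :
    arcsinhp p y * y ^ (p - 1) < (1 + y ^ p) ^ (1 - 1/p) * Real.log (1 + y ^ p) := by
  have key : 0 < (fun x : ℝ => (1 + x ^ p) ^ (1 - 1/p) * Real.log (1 + x ^ p)
      - arcsinhp p x * x ^ (p - 1)) y := by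
    apply pos_at_right hy
    · apply ContinuousOn.sub
      · intro x hx
        have h1 : ContinuousAt (fun x : ℝ => 1 + x ^ p) x :=
          continuousAt_const.add (Real.continuousAt_rpow_const x p (Or.inr (by linarith)))
        exact ((h1.rpow_const (Or.inl (ne_of_gt (upos hp hx.1)))).mul
          (h1.log (ne_of_gt (upos hp hx.1)))).continuousWithinAt
      · exact (cont_arcsinhp hp hy.le).mul
          (fun x hx => (Real.continuousAt_rpow_const x (p-1)
            (Or.inr (by linarith))).continuousWithinAt)
    · simp [arcsinhp_zero, Real.zero_rpow (ne_of_gt (by linarith : (0:ℝ) < p))]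
    · intro x hx
      obtain ⟨hx0, _⟩ := hx
      have hu : (0:ℝ) < 1 + x ^ p := upos hp hx0.le
      have hp0 : p ≠ 0 := by positivity
      have hB : HasDerivAt (fun x : ℝ => x ^ p) (p * x ^ (p - 1)) x :=
        Real.hasDerivAt_rpow_const (Or.inl hx0.ne')
      have hu' : HasDerivAt (fun x : ℝ => 1 + x ^ p) (p * x ^ (p - 1)) x := hB.const_add 1
      have hP : HasDerivAt (fun x : ℝ => (1 + x ^ p) ^ (1 - 1/p))
          (p * x ^ (p - 1) * (1 - 1/p) * (1 + x ^ p) ^ (1 - 1/p - 1)) x :=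
        hu'.rpow_const (Or.inl hu.ne')
      rw [show (1:ℝ) - 1/p - 1 = -1/p from by ring] at hP
      have hlogu : HasDerivAt (fun x : ℝ => Real.log (1 + x ^ p))
          (p * x ^ (p - 1) / (1 + x ^ p)) x := hu'.log hu.ne'
      have hC : HasDerivAt (fun x : ℝ => x ^ (p - 1)) ((p - 1) * x ^ (p - 1 - 1)) x :=
        Real.hasDerivAt_rpow_const (Or.inl hx0.ne')
      refine ⟨_, (hP.mul hlogu).sub ((hasDerivAt_arcsinhp hp hx0).mul hC), ?_⟩
      have e6 : (1 + x ^ p) ^ (1 - 1/p) = (1 + x ^ p) * (1 + x ^ p) ^ (-1/p) := by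
        rw [show (1:ℝ) - 1/p = 1 + (-1/p) from by ring, Real.rpow_add hu, Real.rpow_one]
      have eB : x ^ (p - 1) = x * x ^ (p - 1 - 1) := (xp_split (p := p - 1) hx0).symm
      rw [e6, eB]
      have hCpos : 0 < x ^ (p - 1 - 1) := Real.rpow_pos_of_pos hx0 _
      have keyeq : (p * (x * x ^ (p-1-1)) * (1 - 1/p) * (1 + x ^ p) ^ (-1/p))
            * Real.log (1 + x ^ p)
            + ((1 + x ^ p) * (1 + x ^ p) ^ (-1/p)) * (p * (x * x ^ (p-1-1)) / (1 + x ^ p))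
            - ((1 + x ^ p) ^ (-1/p) * (x * x ^ (p-1-1))
              + arcsinhp p x * ((p - 1) * x ^ (p-1-1)))
          = (p - 1) * x ^ (p-1-1)
            * (x * (1 + x ^ p) ^ (-1/p) * (1 + Real.log (1 + x ^ p)) - arcsinhp p x) := by
        field_simp
        ring
      have h1 := L1 hp hx0
      linarith [keyeq, mul_pos (mul_pos (sub_pos.mpr hp) hCpos) (sub_pos.mpr h1)]
  simpa using key


lemma L3 (hp : 1 < p) {y : ℝ} (hy : 0 < y) :
    Real.log (1 + y ^ p) < arcsinhp p y ^ p := by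
  have key : 0 < (fun x : ℝ => arcsinhp p x ^ p - Real.log (1 + x ^ p)) y := by
    apply pos_at_right hy
    · apply ContinuousOn.sub
      · exact (cont_arcsinhp hp hy.le).rpow_const (fun x hx => Or.inr (by linarith))
      · intro x hx
        have h1 : ContinuousAt (fun x : ℝ => 1 + x ^ p) x :=
          continuousAt_const.add (Real.continuousAt_rpow_const x p (Or.inr (by linarith)))
        exact (h1.log (ne_of_gt (upos hp hx.1))).continuousWithinAt
    · simp [arcsinhp_zero, Real.zero_rpow (ne_of_gt (by linarith : (0:ℝ) < p))]
    · intro x hx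
      obtain ⟨hx0, _⟩ := hx
      have hu : (0:ℝ) < 1 + x ^ p := upos hp hx0.le
      have hp0 : p ≠ 0 := by positivity
      have hB : HasDerivAt (fun x : ℝ => x ^ p) (p * x ^ (p - 1)) x :=
        Real.hasDerivAt_rpow_const (Or.inl hx0.ne')
      have hu' : HasDerivAt (fun x : ℝ => 1 + x ^ p) (p * x ^ (p - 1)) x := hB.const_add 1
      have hlogu : HasDerivAt (fun x : ℝ => Real.log (1 + x ^ p))
          (p * x ^ (p - 1) / (1 + x ^ p)) x := hu'.log hu.ne'
      have hS : HasDerivAt (fun x : ℝ => arcsinhp p x ^ p)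
          ((1 + x ^ p) ^ (-1/p) * p * arcsinhp p x ^ (p - 1)) x := by
        exact (hasDerivAt_arcsinhp hp hx0).rpow_const (p := p) (Or.inr hp.le)
      refine ⟨_, hS.sub hlogu, ?_⟩
      set A := (1 + x ^ p) ^ (-1/p) with hAdef
      have hApos : 0 < A := Real.rpow_pos_of_pos hu _
      have hSpos : 0 < arcsinhp p x := arcsinhp_pos hp hx0
      have hBpos : 0 < x ^ (p - 1) := Real.rpow_pos_of_pos hx0 _
      have hL0 : x * A < arcsinhp p x := L0 hp hx0
      have h1 : (x * A) ^ (p - 1) < arcsinhp p x ^ (p - 1) :=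
        Real.rpow_lt_rpow (by positivity) hL0 (by linarith)
      have eA : A ^ (p - 1) * A = A ^ p := by
        have := Real.rpow_add_one (ne_of_gt hApos) (p - 1)
        rw [show p - 1 + 1 = p from by ring] at this
        exact this.symm
      have e9 : A ^ p = (1 + x ^ p)⁻¹ := by
        rw [hAdef, ← Real.rpow_mul hu.le, show -1/p*p = -1 from by field_simp,
          Real.rpow_neg_one]
      have step : A * p * (x * A) ^ (p - 1) = p * x ^ (p - 1) / (1 + x ^ p) := by
        rw [Real.mul_rpow hx0.le hApos.le]
        have : A * p * (x ^ (p-1) * A ^ (p-1)) = p * x ^ (p-1) * (A ^ (p-1) * A) := by ring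
        rw [this, eA, e9]; ring
      have hlt : A * p * (x * A) ^ (p - 1) < A * p * arcsinhp p x ^ (p - 1) :=
        mul_lt_mul_of_pos_left h1 (by positivity)
      rw [step] at hlt
      linarith
  simpa using key


lemma L4 (hp : 1 < p) :
    StrictAntiOn (fun y : ℝ => Real.log (1 + y ^ p) / arcsinhp p y ^ p) (Ioi 0) := by
  have hder : ∀ x ∈ Ioi (0:ℝ), HasDerivAt (fun y : ℝ => Real.log (1 + y ^ p) / arcsinhp p y ^ p)
      ((p * x ^ (p - 1) / (1 + x ^ p) * arcsinhp p x ^ p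
        - Real.log (1 + x ^ p) * ((1 + x ^ p) ^ (-1/p) * p * arcsinhp p x ^ (p - 1)))
        / (arcsinhp p x ^ p) ^ 2) x := by
    intro x hx0
    rw [mem_Ioi] at hx0
    have hu : (0:ℝ) < 1 + x ^ p := upos hp hx0.le
    have hB : HasDerivAt (fun x : ℝ => x ^ p) (p * x ^ (p - 1)) x :=
      Real.hasDerivAt_rpow_const (Or.inl hx0.ne')
    have hu' : HasDerivAt (fun x : ℝ => 1 + x ^ p) (p * x ^ (p - 1)) x := hB.const_add 1
    have hlogu : HasDerivAt (fun x : ℝ => Real.log (1 + x ^ p))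
        (p * x ^ (p - 1) / (1 + x ^ p)) x := hu'.log hu.ne'
    have hSp : HasDerivAt (fun x : ℝ => arcsinhp p x ^ p)
        ((1 + x ^ p) ^ (-1/p) * p * arcsinhp p x ^ (p - 1)) x :=
      (hasDerivAt_arcsinhp hp hx0).rpow_const (p := p) (Or.inr hp.le)
    exact hlogu.div hSp (ne_of_gt (Real.rpow_pos_of_pos (arcsinhp_pos hp hx0) p))
  apply strictAntiOn_of_deriv_neg (convex_Ioi 0)
  · exact fun x hx => ((hder x hx).differentiableAt.continuousAt).continuousWithinAt
  · intro x hx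
    rw [interior_Ioi] at hx
    rw [(hder x hx).deriv]
    have hx0 : 0 < x := hx
    have hu : (0:ℝ) < 1 + x ^ p := upos hp hx0.le
    have hp0 : p ≠ 0 := by positivity
    have hSpos : 0 < arcsinhp p x := arcsinhp_pos hp hx0
    have hSp1 : 0 < arcsinhp p x ^ (p - 1) := Real.rpow_pos_of_pos hSpos _
    apply div_neg_of_neg_of_pos
    · have eS : arcsinhp p x ^ p = arcsinhp p x ^ (p - 1) * arcsinhp p x := by
        have := Real.rpow_add_one (ne_of_gt hSpos) (p - 1)
        rw [show p - 1 + 1 = p from by ring] at this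
        exact this
      have e6 : (1 + x ^ p) ^ (1 - 1/p) = (1 + x ^ p) * (1 + x ^ p) ^ (-1/p) := by
        rw [show (1:ℝ) - 1/p = 1 + (-1/p) from by ring, Real.rpow_add hu, Real.rpow_one]
      have h2 := L2 hp hx0
      rw [e6] at h2
      have keyn : p * x ^ (p - 1) / (1 + x ^ p) * arcsinhp p x ^ p
          - Real.log (1 + x ^ p) * ((1 + x ^ p) ^ (-1/p) * p * arcsinhp p x ^ (p - 1))
          = (p * arcsinhp p x ^ (p - 1) / (1 + x ^ p))
            * (arcsinhp p x * x ^ (p - 1)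
              - (1 + x ^ p) * (1 + x ^ p) ^ (-1/p) * Real.log (1 + x ^ p)) := by
        rw [eS]; field_simp
      rw [keyn]
      exact mul_neg_of_pos_of_neg (by positivity) (by linarith)
    · positivity


/-- For `p > 1`, `exp(λ₁ x^p) < coshₚ x < exp(η₁ x^p)` on `(0, d)`, with
`λ₁ = ln(coshₚ d)/d^p`, `η₁ = 1/p`, stated via `y = sinhₚ x`, `x = arcsinhₚ y`. -/
theorem exp_bounds_coshp (p : ℝ) (hp : 1 < p) (y₀ : ℝ) (hy₀ : 0 < y₀)
    (d lam₁ η₁ : ℝ) (hd : d = arcsinhp p y₀)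
    (hlam₁ : lam₁ = Real.log ((1 + y₀ ^ p) ^ (1 / p)) / d ^ p)
    (hη₁ : η₁ = 1 / p) :
    ∀ y ∈ Set.Ioo 0 y₀,
      Real.exp (lam₁ * arcsinhp p y ^ p) < (1 + y ^ p) ^ (1 / p) ∧
      (1 + y ^ p) ^ (1 / p) < Real.exp (η₁ * arcsinhp p y ^ p) := by
  intro y hy
  obtain ⟨hy0, hyy⟩ := hy
  have hp0 : (0:ℝ) < p := by linarith
  have hu : (0:ℝ) < 1 + y ^ p := upos hp hy0.le
  have hu₀ : (0:ℝ) < 1 + y₀ ^ p := upos hp hy₀.le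
  have hx : 0 < arcsinhp p y := arcsinhp_pos hp hy0
  have hdpos : 0 < d := hd ▸ arcsinhp_pos hp hy₀
  have hX : 0 < arcsinhp p y ^ p := Real.rpow_pos_of_pos hx p
  have hdp : 0 < d ^ p := Real.rpow_pos_of_pos hdpos p
  have hcosh : (1 + y ^ p) ^ (1/p) = Real.exp (Real.log (1 + y ^ p) * (1/p)) :=
    Real.rpow_def_of_pos hu _
  constructor
  · rw [hcosh]
    apply Real.exp_lt_exp.mpr
    have hglt := L4 hp (mem_Ioi.mpr hy0) (mem_Ioi.mpr hy₀) hyy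
    simp only at hglt
    rw [← hd] at hglt
    have h5 : Real.log (1 + y₀ ^ p) / d ^ p * arcsinhp p y ^ p < Real.log (1 + y ^ p) := by
      calc Real.log (1 + y₀ ^ p) / d ^ p * arcsinhp p y ^ p
          < Real.log (1 + y ^ p) / arcsinhp p y ^ p * arcsinhp p y ^ p :=
            mul_lt_mul_of_pos_right hglt hX
        _ = Real.log (1 + y ^ p) := div_mul_cancel₀ _ hX.ne'
    rw [hlam₁, Real.log_rpow hu₀]
    have h6 := mul_lt_mul_of_pos_left h5 (show (0:ℝ) < 1/p by positivity)
    have h7 : 1 / p * Real.log (1 + y₀ ^ p) / d ^ p * arcsinhp p y ^ p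
        = 1 / p * (Real.log (1 + y₀ ^ p) / d ^ p * arcsinhp p y ^ p) := by ring
    rw [h7]
    linarith
  · rw [hcosh, hη₁]
    apply Real.exp_lt_exp.mpr
    have h8 := mul_lt_mul_of_pos_left (L3 hp hy0) (show (0:ℝ) < 1/p by positivity)
    linarith

end Main
end

section
/- Let p ≥ 2 be a real number. If y ∈ (0, 1) and z > 0 satisfy arcsinₚ(y) = arcsinhₚ(z) =: x, then x·(1 − y^p)^(1/p)/y < z/(x·(1 + z^p)^(1/p)). (This is the inequality x/tanₚ(x) < tanhₚ(x)/x for x ∈ (0, πₚ/2).) -/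
open Real

namespace DivTanpAux

lemma cont_rpow {p : ℝ} (hp : 0 < p) : Continuous fun s : ℝ => s ^ p :=
  continuous_iff_continuousAt.2 fun s => Real.continuousAt_rpow_const s p (Or.inr hp.le)

lemma one_sub_pos' {p : ℝ} (hp : 0 < p) {s : ℝ} (hs : |s| < 1) : 0 < 1 - s ^ p := by
  have h1 : s ^ p ≤ |s ^ p| := le_abs_self _
  have h2 := Real.abs_rpow_le_abs_rpow s p
  have h3 : |s| ^ p < 1 := Real.rpow_lt_one (abs_nonneg s) hs hp
  linarith

lemma one_add_pos' {p : ℝ} (hp : 0 < p) {t : ℝ} (ht : -1 < t) : 0 < 1 + t ^ p := by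
  rcases le_or_gt 0 t with h | h
  · have := Real.rpow_nonneg h p; linarith
  · have habs : |t| < 1 := abs_lt.2 ⟨ht, lt_trans h one_pos⟩
    have h2 := Real.abs_rpow_le_abs_rpow t p
    have h3 : |t| ^ p < 1 := Real.rpow_lt_one (abs_nonneg t) habs hp
    have h4 : -(t ^ p) ≤ |t ^ p| := neg_le_abs _
    linarith
  
lemma primitive_hasDerivAt {f : ℝ → ℝ} {U : Set ℝ} (hU : IsOpen U) (hf : ContinuousOn f U)
    {t : ℝ} (hsub : Set.uIcc 0 t ⊆ U) (ht : t ∈ U) :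
    HasDerivAt (fun u => ∫ s in (0:ℝ)..u, f s) (f t) t :=
  intervalIntegral.integral_hasDerivAt_right ((hf.mono hsub).intervalIntegrable)
    (hf.stronglyMeasurableAtFilter hU t ht) (hf.continuousAt (hU.mem_nhds ht))

lemma amgm_aux {f a b c : ℝ} (hf : 0 < f) (ha : 0 < a) (hb : 0 < b) (hc : 0 < c)
    (hab : f ^ 2 < a * b) : f < c / 2 * a + (2 * c)⁻¹ * b := by
  have h1 : f < Real.sqrt (a * b) := (Real.lt_sqrt hf.le).2 hab
  have h2 : Real.sqrt (a * b) ≤ c / 2 * a + (2 * c)⁻¹ * b := by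
    rw [Real.sqrt_mul ha.le]
    have hsa := Real.sq_sqrt ha.le
    have hsb := Real.sq_sqrt hb.le
    have hkey2 : 2 * c * (Real.sqrt a * Real.sqrt b) ≤ c ^ 2 * a + b := by
      nlinarith [sq_nonneg (c * Real.sqrt a - Real.sqrt b)]
    have h2c : 0 < 2 * c := by linarith
    calc Real.sqrt a * Real.sqrt b = (2 * c * (Real.sqrt a * Real.sqrt b)) / (2 * c) := by
          field_simp
      _ ≤ (c ^ 2 * a + b) / (2 * c) := by
          gcongr
      _ = c / 2 * a + (2 * c)⁻¹ * b := by field_simp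
  linarith

end DivTanpAux

open DivTanpAux in
/-- For `p ≥ 2`, `x/tanₚ x < tanhₚ(x)/x` for `x ∈ (0, πₚ/2)`, stated via
`y = sinₚ x`, `z = sinhₚ x`, `x = arcsinₚ y = arcsinhₚ z`. -/
theorem div_tanp_lt_tanhp_div (p : ℝ) (hp : 2 ≤ p) (y z x : ℝ)
    (hy : y ∈ Set.Ioo (0:ℝ) 1) (hz : 0 < z)
    (hxy : arcsinp p y = x) (hxz : arcsinhp p z = x) :
    x * (1 - y ^ p) ^ (1 / p) / y < z / (x * (1 + z ^ p) ^ (1 / p)) := by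
  obtain ⟨hy0, hy1⟩ := hy
  have hp0 : (0:ℝ) < p := by linarith
  have hp1 : (1:ℝ) < p := by linarith
  set F : ℝ → ℝ := fun s => (1 - s ^ p) ^ (-1 / p) with hFdef
  set G : ℝ → ℝ := fun t => (1 + t ^ p) ^ (-1 / p) with hGdef
  have hFc : ContinuousOn F (Set.Ioo (-1:ℝ) 1) := by
    apply ContinuousOn.rpow_const ((continuous_const.sub (cont_rpow hp0)).continuousOn)
    intro s hs
    exact Or.inl (one_sub_pos' hp0 (abs_lt.2 ⟨hs.1, hs.2⟩)).ne'
  have hGc : ContinuousOn G (Set.Ioi (-1:ℝ)) := by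
    apply ContinuousOn.rpow_const ((continuous_const.add (cont_rpow hp0)).continuousOn)
    intro t ht
    exact Or.inl (one_add_pos' hp0 ht).ne'
  have hFpos : ∀ s ∈ Set.Ioo (-1:ℝ) 1, 0 < F s := fun s hs =>
    Real.rpow_pos_of_pos (one_sub_pos' hp0 (abs_lt.2 ⟨hs.1, hs.2⟩)) _
  have hGpos : ∀ t : ℝ, -1 < t → 0 < G t := fun t ht =>
    Real.rpow_pos_of_pos (one_add_pos' hp0 ht) _
  set A : ℝ → ℝ := fun s => arcsinp p s with hAdef
  set B : ℝ → ℝ := fun t => arcsinhp p t with hBdef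
  have hsubI : ∀ {s : ℝ}, s ∈ Set.Ioo (-1:ℝ) 1 → Set.uIcc 0 s ⊆ Set.Ioo (-1:ℝ) 1 := by
    intro s hs u hu
    rcases Set.mem_uIcc.1 hu with h | h
    · exact ⟨by linarith [h.1], lt_of_le_of_lt h.2 hs.2⟩
    · exact ⟨lt_of_lt_of_le hs.1 h.1, by linarith [h.2]⟩
  have hsubJ : ∀ {t : ℝ}, -1 < t → Set.uIcc 0 t ⊆ Set.Ioi (-1:ℝ) := by
    intro t ht u hu
    rcases Set.mem_uIcc.1 hu with h | h
    · exact lt_of_lt_of_le (by norm_num) h.1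
    · exact lt_of_lt_of_le ht h.1
  have hAderiv : ∀ s ∈ Set.Ioo (-1:ℝ) 1, HasDerivAt A (F s) s := by
    intro s hs
    have h := primitive_hasDerivAt isOpen_Ioo hFc (hsubI hs) hs
    simpa [hAdef, arcsinp] using h
  have hBderiv : ∀ t : ℝ, -1 < t → HasDerivAt B (G t) t := by
    intro t ht
    have h := primitive_hasDerivAt isOpen_Ioi hGc (hsubJ ht) ht
    simpa [hBdef, arcsinhp] using h
  have hGint : ∀ a b : ℝ, -1 < a → -1 < b → IntervalIntegrable G MeasureTheory.volume a b := by
    intro a b ha hb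
    apply (hGc.mono ?_).intervalIntegrable
    intro u hu
    rcases Set.mem_uIcc.1 hu with h | h
    · exact lt_of_lt_of_le ha h.1
    · exact lt_of_lt_of_le hb h.1
  have hBm : ∀ a b : ℝ, 0 ≤ a → a < b → B a < B b := by
    intro a b ha hab
    have ha1 : (-1:ℝ) < a := by linarith
    have hb1 : (-1:ℝ) < b := by linarith
    have hkey : B b - B a = ∫ t in a..b, G t := by
      simp only [hBdef, arcsinhp]
      rw [← intervalIntegral.integral_interval_sub_left (hGint 0 b (by norm_num) hb1)
        (hGint 0 a (by norm_num) ha1)]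
    have hpos : 0 < ∫ t in a..b, G t := by
      apply intervalIntegral.intervalIntegral_pos_of_pos_on
        (hGint a b ha1 hb1) (fun t ht => hGpos t (by linarith [ht.1])) hab
    linarith
  have hBm' : ∀ a b : ℝ, 0 ≤ a → a ≤ b → B a ≤ B b := by
    intro a b ha hab
    rcases eq_or_lt_of_le hab with h | h
    · rw [h]
    · exact (hBm a b ha h).le
  have hFint : ∀ a b : ℝ, a ∈ Set.Ioo (-1:ℝ) 1 → b ∈ Set.Ioo (-1:ℝ) 1 →
      IntervalIntegrable F MeasureTheory.volume a b := by
    intro a b ha hb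
    apply (hFc.mono ?_).intervalIntegrable
    intro u hu
    rcases Set.mem_uIcc.1 hu with h | h
    · exact ⟨lt_of_lt_of_le ha.1 h.1, lt_of_le_of_lt h.2 hb.2⟩
    · exact ⟨lt_of_lt_of_le hb.1 h.1, lt_of_le_of_lt h.2 ha.2⟩
  have hAm : ∀ a b : ℝ, 0 ≤ a → a < b → b < 1 → A a < A b := by
    intro a b ha hab hb1
    have haI : a ∈ Set.Ioo (-1:ℝ) 1 := ⟨by linarith, by linarith⟩
    have hbI : b ∈ Set.Ioo (-1:ℝ) 1 := ⟨by linarith, hb1⟩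
    have hkey : A b - A a = ∫ t in a..b, F t := by
      simp only [hAdef, arcsinp]
      rw [← intervalIntegral.integral_interval_sub_left (hFint 0 b (by norm_num) hbI)
        (hFint 0 a (by norm_num) haI)]
    have hpos : 0 < ∫ t in a..b, F t := by
      apply intervalIntegral.intervalIntegral_pos_of_pos_on
        (hFint a b haI hbI) (fun t ht => hFpos t ⟨by linarith [ht.1], by linarith [ht.2]⟩) hab
    linarith
  have hA0 : A 0 = 0 := by simp [hAdef, arcsinp]
  have hB0 : B 0 = 0 := by simp [hBdef, arcsinhp]
  have hAy : A y = x := by rw [hAdef]; exact hxy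
  have hBz : B z = x := by rw [hBdef]; exact hxz
  have hx0 : 0 < x := by
    have := hAm 0 y le_rfl hy0 hy1
    rw [hA0, hAy] at this; exact this
  have hAmem : ∀ s ∈ Set.Icc 0 y, A s ∈ Set.Icc 0 x := by
    intro s hs
    constructor
    · rcases eq_or_lt_of_le hs.1 with h | h
      · rw [← h, hA0]
      · rw [← hA0]; exact (hAm 0 s le_rfl h (lt_of_le_of_lt hs.2 hy1)).le
    · rcases eq_or_lt_of_le hs.2 with h | h
      · rw [h, hAy]
      · rw [← hAy]; exact (hAm s y hs.1 h hy1).le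
  -- inverse function V of B on [0,z]
  have hBcont : ContinuousOn B (Set.Icc 0 z) := fun t ht =>
    ((hBderiv t (by linarith [ht.1])).continuousAt).continuousWithinAt
  have hIVT : ∀ u ∈ Set.Icc 0 x, ∃ t ∈ Set.Icc 0 z, B t = u := by
    intro u hu
    have h := intermediate_value_Icc hz.le hBcont
    have hu' : u ∈ Set.Icc (B 0) (B z) := by rw [hB0, hBz]; exact hu
    obtain ⟨t, ht, htu⟩ := h hu'
    exact ⟨t, ht, htu⟩
  set V : ℝ → ℝ := fun u => Function.invFunOn B (Set.Icc 0 z) u with hVdef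
  have hVmem : ∀ u ∈ Set.Icc 0 x, V u ∈ Set.Icc 0 z := fun u hu =>
    Function.invFunOn_mem (hIVT u hu)
  have hBV : ∀ u ∈ Set.Icc 0 x, B (V u) = u := fun u hu =>
    Function.invFunOn_eq (hIVT u hu)
  have hBsm : StrictMonoOn B (Set.Icc 0 z) := fun a ha b _ hab => hBm a b ha.1 hab
  have hBmemIcc : ∀ t ∈ Set.Icc 0 z, B t ∈ Set.Icc 0 x := by
    intro t ht
    constructor
    · rw [← hB0]; exact hBm' 0 t le_rfl ht.1
    · rw [← hBz]; exact hBm' t z ht.1 ht.2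
  have hVB : ∀ t ∈ Set.Icc 0 z, V (B t) = t := by
    intro t ht
    apply hBsm.injOn (hVmem _ (hBmemIcc t ht)) ht
    rw [hBV _ (hBmemIcc t ht)]
  have hV0 : V 0 = 0 := by
    have := hVB 0 ⟨le_rfl, hz.le⟩; rwa [hB0] at this
  have hVx : V x = z := by
    have := hVB z ⟨hz.le, le_rfl⟩; rwa [hBz] at this
  have hVsm : StrictMonoOn V (Set.Icc 0 x) := by
    intro u hu v hv huv
    by_contra hle
    push_neg at hle
    have h1 : B (V v) ≤ B (V u) := hBm' (V v) (V u) (hVmem v hv).1 hle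
    rw [hBV u hu, hBV v hv] at h1
    exact absurd h1 (not_le.2 huv)
  have hVcont : ContinuousOn V (Set.Icc 0 x) := by
    intro u hu
    have himg : Set.Icc (0:ℝ) z ⊆ V '' Set.Icc 0 x := by
      intro t ht; exact ⟨B t, hBmemIcc t ht, hVB t ht⟩
    have hright : u < x → ContinuousWithinAt V (Set.Ici u) u := by
      intro hux
      refine StrictMonoOn.continuousWithinAt_right_of_image_mem_nhdsWithin hVsm
        (Icc_mem_nhdsGE_of_mem ⟨hu.1, hux⟩) ?_
      have hVu_lt : V u < z := by
        rw [← hVx]; exact hVsm hu ⟨hx0.le, le_rfl⟩ hux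
      exact Filter.mem_of_superset (Icc_mem_nhdsGE_of_mem ⟨(hVmem u hu).1, hVu_lt⟩) himg
    have hleft : 0 < u → ContinuousWithinAt V (Set.Iic u) u := by
      intro h0u
      refine StrictMonoOn.continuousWithinAt_left_of_image_mem_nhdsWithin hVsm
        (Icc_mem_nhdsLE_of_mem ⟨h0u, hu.2⟩) ?_
      have h0V : 0 < V u := by rw [← hV0]; exact hVsm ⟨le_rfl, hx0.le⟩ hu h0u
      exact Filter.mem_of_superset (Icc_mem_nhdsLE_of_mem ⟨h0V, (hVmem u hu).2⟩) himg
    rcases eq_or_lt_of_le hu.1 with h0 | h0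
    · exact (hright (by rw [← h0]; exact hx0)).mono (fun v hv => by simp only [Set.mem_Ici, ← h0]; exact hv.1)
    · rcases eq_or_lt_of_le hu.2 with hx' | hx'
      · exact (hleft h0).mono (fun v hv => by simp only [Set.mem_Iic, hx']; exact hv.2)
      · exact ((hleft h0).union (hright hx')).mono
          (fun v _ => (le_total v u).imp (fun h => h) (fun h => h))
  -- the coupling function Z = sinhp ∘ arcsinp
  set Z : ℝ → ℝ := fun s => V (A s) with hZdef
  have hyIoo : y ∈ Set.Ioo (-1:ℝ) 1 := ⟨by linarith, hy1⟩
  have hIccIoo : Set.Icc (0:ℝ) y ⊆ Set.Ioo (-1:ℝ) 1 := fun s hs =>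
    ⟨by linarith [hs.1], lt_of_le_of_lt hs.2 hy1⟩
  have hAcont : ContinuousOn A (Set.Icc 0 y) := fun s hs =>
    ((hAderiv s (hIccIoo hs)).continuousAt).continuousWithinAt
  have hZcont : ContinuousOn Z (Set.Icc 0 y) := hVcont.comp hAcont (fun s hs => hAmem s hs)
  have hZmem : ∀ s ∈ Set.Icc 0 y, Z s ∈ Set.Icc 0 z := fun s hs => hVmem _ (hAmem s hs)
  have hBZ : ∀ s ∈ Set.Icc 0 y, B (Z s) = A s := fun s hs => hBV _ (hAmem s hs)
  have hZ0 : Z 0 = 0 := by rw [hZdef]; simp only [hA0]; exact hV0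
  have hZy : Z y = z := by rw [hZdef]; simp only [hAy]; exact hVx
  -- derivative of s ↦ s * (1 - s^p)^(-1/p)
  have hone_sub : ∀ σ ∈ Set.Icc (0:ℝ) y, 0 < 1 - σ ^ p := by
    intro σ hσ
    exact one_sub_pos' hp0 (abs_lt.2 ⟨by linarith [hσ.1], lt_of_le_of_lt hσ.2 hy1⟩)
  have hWderiv : ∀ σ ∈ Set.Icc (0:ℝ) y,
      HasDerivAt (fun σ : ℝ => σ * (1 - σ ^ p) ^ (-1 / p)) ((1 - σ ^ p) ^ (-1 / p - 1)) σ := by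
    intro σ hσ
    have hX : 0 < 1 - σ ^ p := hone_sub σ hσ
    have h1 : HasDerivAt (fun σ : ℝ => 1 - σ ^ p) (-(p * σ ^ (p - 1))) σ := by
      simpa using (Real.hasDerivAt_rpow_const (x := σ) (p := p) (Or.inr hp1.le)).const_sub 1
    have h2 : HasDerivAt (fun σ : ℝ => (1 - σ ^ p) ^ (-1 / p))
        (σ ^ (p - 1) * (1 - σ ^ p) ^ (-1 / p - 1)) σ := by
      have h := h1.rpow_const (p := -1 / p) (Or.inl hX.ne')
      convert h using 1
      field_simp
    have h3 : HasDerivAt (fun σ : ℝ => σ * (1 - σ ^ p) ^ (-1 / p))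
        (1 * (1 - σ ^ p) ^ (-1 / p) + σ * (σ ^ (p - 1) * (1 - σ ^ p) ^ (-1 / p - 1))) σ :=
      (hasDerivAt_id' (x := σ)).mul h2
    convert h3 using 1
    have hσp : σ * σ ^ (p - 1) = σ ^ p := by
      have he : σ ^ p = σ ^ (1 + (p - 1)) := by norm_num
      rw [he, Real.rpow_add' hσ.1 (by intro h; apply hp0.ne'; linarith), Real.rpow_one]
    have hXsplit : (1 - σ ^ p) ^ (-1 / p) = (1 - σ ^ p) ^ (-1 / p - 1) * (1 - σ ^ p) := by
      nth_rewrite 1 [show (-1 / p : ℝ) = (-1 / p - 1) + 1 by ring]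
      rw [Real.rpow_add hX, Real.rpow_one]
    rw [one_mul, hXsplit, show σ * (σ ^ (p - 1) * (1 - σ ^ p) ^ (-1 / p - 1))
      = (σ * σ ^ (p - 1)) * (1 - σ ^ p) ^ (-1 / p - 1) from by ring, hσp]
    ring
  have hW1 : ∀ σ ∈ Set.Icc (0:ℝ) y, 1 + (σ * (1 - σ ^ p) ^ (-1 / p)) ^ p = (1 - σ ^ p)⁻¹ := by
    intro σ hσ
    have hX : 0 < 1 - σ ^ p := hone_sub σ hσ
    have hmul : (σ * (1 - σ ^ p) ^ (-1 / p)) ^ p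
        = σ ^ p * ((1 - σ ^ p) ^ (-1 / p)) ^ p :=
      Real.mul_rpow hσ.1 (Real.rpow_nonneg hX.le _)
    have hpow : ((1 - σ ^ p) ^ (-1 / p)) ^ p = (1 - σ ^ p)⁻¹ := by
      rw [← Real.rpow_mul hX.le, show (-1 / p) * p = (-1 : ℝ) from by field_simp,
        Real.rpow_neg_one]
    rw [hmul, hpow]
    field_simp
    ring
  -- key pointwise estimate: (1 - s^p)(1 + (Z s)^p) < 1 on (0, y]
  have hkey : ∀ s ∈ Set.Ioc (0:ℝ) y, (1 - s ^ p) * (1 + Z s ^ p) < 1 := by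
    intro s hs
    obtain ⟨hs0, hsy⟩ := hs
    have hsIcc : s ∈ Set.Icc (0:ℝ) y := ⟨hs0.le, hsy⟩
    have hX : 0 < 1 - s ^ p := hone_sub s hsIcc
    set w : ℝ := s * (1 - s ^ p) ^ (-1 / p) with hwdef
    have hw0 : 0 < w := mul_pos hs0 (Real.rpow_pos_of_pos hX _)
    have hinvcont : ContinuousOn (fun σ : ℝ => (1 - σ ^ p)⁻¹) (Set.Icc 0 y) := by
      apply ContinuousOn.inv₀ ((continuous_const.sub (cont_rpow hp0)).continuousOn)
      intro σ hσ; exact (hone_sub σ hσ).ne'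
    have hsubs : Set.uIcc (0:ℝ) s ⊆ Set.Icc 0 y := by
      rw [Set.uIcc_of_le hs0.le]
      exact fun u hu => ⟨hu.1, le_trans hu.2 hsy⟩
    have hBw : B w = ∫ σ in (0:ℝ)..s, (1 - σ ^ p)⁻¹ := by
      have hFTC := intervalIntegral.integral_eq_sub_of_hasDerivAt
        (f := fun σ : ℝ => B (σ * (1 - σ ^ p) ^ (-1 / p)))
        (f' := fun σ : ℝ => (1 - σ ^ p)⁻¹) (a := 0) (b := s) ?_ ?_
      · rw [hFTC]
        norm_num [hB0]
        rw [hwdef]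
      · intro σ hσ
        have hσI : σ ∈ Set.Icc (0:ℝ) y := hsubs hσ
        have hXσ : 0 < 1 - σ ^ p := hone_sub σ hσI
        have h1 := hWderiv σ hσI
        have hwσ : 0 ≤ σ * (1 - σ ^ p) ^ (-1 / p) :=
          mul_nonneg hσI.1 (Real.rpow_nonneg hXσ.le _)
        have h2 := hBderiv (σ * (1 - σ ^ p) ^ (-1 / p)) (by linarith)
        have h3 := h2.comp σ h1
        have hGval : G (σ * (1 - σ ^ p) ^ (-1 / p)) = (1 - σ ^ p) ^ (1 / p : ℝ) := by
          rw [hGdef]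
          simp only
          rw [hW1 σ hσI, ← Real.rpow_neg_one (1 - σ ^ p), ← Real.rpow_mul hXσ.le,
            show ((-1:ℝ)) * (-1 / p) = 1 / p from by ring]
        have : G (σ * (1 - σ ^ p) ^ (-1 / p)) * (1 - σ ^ p) ^ (-1 / p - 1) = (1 - σ ^ p)⁻¹ := by
          rw [hGval, ← Real.rpow_add hXσ, show (1 / p) + (-1 / p - 1) = (-1 : ℝ) from by ring,
            Real.rpow_neg_one]
        show HasDerivAt (fun σ' : ℝ => B (σ' * (1 - σ' ^ p) ^ (-1 / p))) ((1 - σ ^ p)⁻¹) σ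
        rw [← this]
        simpa [Function.comp_def] using h3
      · exact ((hinvcont.mono hsubs).intervalIntegrable)
    have hAs : A s = ∫ σ in (0:ℝ)..s, F σ := by rw [hAdef]; simp [arcsinp, hFdef]
    have hlt : A s < B w := by
      rw [hAs, hBw]
      have hptw : ∀ σ ∈ Set.Ioc (0:ℝ) s, F σ < (1 - σ ^ p)⁻¹ := by
        intro σ hσ
        have hσI : σ ∈ Set.Icc (0:ℝ) y := ⟨hσ.1.le, le_trans hσ.2 hsy⟩
        have hXσ : 0 < 1 - σ ^ p := hone_sub σ hσI
        have hXσ1 : 1 - σ ^ p < 1 := by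
          have : 0 < σ ^ p := Real.rpow_pos_of_pos hσ.1 _
          linarith
        have hexp : (-1 : ℝ) < -1 / p := by
          rw [neg_div, neg_lt_neg_iff, div_lt_one hp0]; exact hp1
        have := Real.rpow_lt_rpow_of_exponent_gt hXσ hXσ1 hexp
        rwa [Real.rpow_neg_one] at this
      apply intervalIntegral.integral_lt_integral_of_continuousOn_of_le_of_exists_lt hs0
        (hFc.mono (fun u hu => hIccIoo ⟨hu.1, le_trans hu.2 hsy⟩))
        (hinvcont.mono (fun u hu => ⟨hu.1, le_trans hu.2 hsy⟩))
        (fun σ hσ => (hptw σ hσ).le)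
        ⟨s, ⟨hs0.le, le_rfl⟩, hptw s ⟨hs0, le_rfl⟩⟩
    have hZw : Z s < w := by
      by_contra hge
      push_neg at hge
      have h1 : B w ≤ B (Z s) := hBm' w (Z s) hw0.le hge
      rw [hBZ s hsIcc] at h1
      linarith
    have hZnn : 0 ≤ Z s := (hZmem s hsIcc).1
    have hZp : Z s ^ p < w ^ p := Real.rpow_lt_rpow hZnn hZw hp0
    have h1 := hW1 s hsIcc
    rw [← hwdef] at h1
    calc (1 - s ^ p) * (1 + Z s ^ p) < (1 - s ^ p) * (1 + w ^ p) := by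
          apply mul_lt_mul_of_pos_left (by linarith) hX
      _ = 1 := by rw [h1]; field_simp
  -- the tangent-side integral
  have hXinvc : ContinuousOn (fun σ : ℝ => (1 - σ ^ p)⁻¹) (Set.Icc 0 y) := by
    apply ContinuousOn.inv₀ ((continuous_const.sub (cont_rpow hp0)).continuousOn)
    intro σ hσ; exact (hone_sub σ hσ).ne'
  have hFcy : ContinuousOn F (Set.Icc 0 y) := hFc.mono hIccIoo
  have hT : (∫ s in (0:ℝ)..y, F s * (1 - s ^ p)⁻¹) = y * (1 - y ^ p) ^ (-1 / p) := by
    have hFTC := intervalIntegral.integral_eq_sub_of_hasDerivAt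
      (f := fun σ : ℝ => σ * (1 - σ ^ p) ^ (-1 / p))
      (f' := fun σ : ℝ => F σ * (1 - σ ^ p)⁻¹) (a := 0) (b := y) ?_ ?_
    · rw [hFTC]; norm_num
    · intro σ hσ
      have hσI : σ ∈ Set.Icc (0:ℝ) y := by rwa [Set.uIcc_of_le hy0.le] at hσ
      have hXσ : 0 < 1 - σ ^ p := hone_sub σ hσI
      have heq : F σ * (1 - σ ^ p)⁻¹ = (1 - σ ^ p) ^ (-1 / p - 1) := by
        rw [hFdef]
        simp only
        rw [← Real.rpow_neg_one (1 - σ ^ p), ← Real.rpow_add hXσ,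
          show (-1 / p) + (-1 : ℝ) = -1 / p - 1 from by ring]
      show HasDerivAt (fun σ' : ℝ => σ' * (1 - σ' ^ p) ^ (-1 / p)) (F σ * (1 - σ ^ p)⁻¹) σ
      rw [heq]
      exact hWderiv σ hσI
    · apply ContinuousOn.intervalIntegrable
      rw [Set.uIcc_of_le hy0.le]
      exact hFcy.mul hXinvc
  -- derivative of Z on the interior
  have hZderiv : ∀ s ∈ Set.Ioo (0:ℝ) y,
      HasDerivAt Z ((1 + Z s ^ p) ^ (1 / p : ℝ) * F s) s := by
    intro s hs
    have hsIcc : s ∈ Set.Icc (0:ℝ) y := ⟨hs.1.le, hs.2.le⟩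
    have huIoo : A s ∈ Set.Ioo 0 x := by
      constructor
      · rw [← hA0]; exact hAm 0 s le_rfl hs.1 (lt_trans hs.2 hy1)
      · rw [← hAy]; exact hAm s y hs.1.le hs.2 hy1
    have huIcc : A s ∈ Set.Icc 0 x := ⟨huIoo.1.le, huIoo.2.le⟩
    have htpos : 0 < V (A s) := by
      rw [← hV0]; exact hVsm ⟨le_rfl, hx0.le⟩ huIcc huIoo.1
    have hVd : HasDerivAt V (G (V (A s)))⁻¹ (A s) := by
      apply HasDerivAt.of_local_left_inverse
        (hVcont.continuousAt (Icc_mem_nhds huIoo.1 huIoo.2))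
        (hBderiv (V (A s)) (by linarith))
        (hGpos (V (A s)) (by linarith)).ne'
      filter_upwards [Ioo_mem_nhds huIoo.1 huIoo.2] with v hv
      exact hBV v ⟨hv.1.le, hv.2.le⟩
    have hcomp := hVd.comp s (hAderiv s (hIccIoo hsIcc))
    have heq : (G (V (A s)))⁻¹ = (1 + Z s ^ p) ^ (1 / p : ℝ) := by
      rw [hGdef]
      simp only
      rw [hZdef]
      simp only
      rw [show (-1 / p : ℝ) = -(1 / p) from by ring,
        Real.rpow_neg (by positivity : (0:ℝ) ≤ 1 + V (A s) ^ p), inv_inv]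
    have hgoal : HasDerivAt (V ∘ A) ((1 + Z s ^ p) ^ (1 / p : ℝ) * F s) s := by
      rw [← heq]; exact hcomp
    exact hgoal
  -- the hyperbolic-side integral
  have hZppos : ∀ s ∈ Set.Icc (0:ℝ) y, 0 < 1 + Z s ^ p := by
    intro s hs
    have := Real.rpow_nonneg (hZmem s hs).1 p
    linarith
  have hYinvc : ContinuousOn (fun s : ℝ => (1 + Z s ^ p)⁻¹) (Set.Icc 0 y) := by
    apply ContinuousOn.inv₀
    · exact continuousOn_const.add (((cont_rpow hp0).comp_continuousOn hZcont))
    · intro s hs; exact (hZppos s hs).ne'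
  have hH : (∫ s in (0:ℝ)..y, F s * (1 + Z s ^ p)⁻¹) = z * (1 + z ^ p) ^ (-1 / p) := by
    have hcontR : ContinuousOn (fun s : ℝ => Z s * (1 + Z s ^ p) ^ (-1 / p)) (Set.Icc 0 y) := by
      apply hZcont.mul
      apply ContinuousOn.rpow_const
        (continuousOn_const.add ((cont_rpow hp0).comp_continuousOn hZcont))
      intro s hs; exact Or.inl (hZppos s hs).ne'
    have hFTC := intervalIntegral.integral_eq_sub_of_hasDeriv_right_of_le
      (f' := fun s : ℝ => F s * (1 + Z s ^ p)⁻¹) hy0.le hcontR ?_ ?_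
    · rw [hFTC, hZy, hZ0]
      rw [Real.zero_rpow hp0.ne']
      norm_num
    · intro s hs
      have hsIcc : s ∈ Set.Icc (0:ℝ) y := ⟨hs.1.le, hs.2.le⟩
      have hY : 0 < 1 + Z s ^ p := hZppos s hsIcc
      have hΦ : HasDerivAt (fun t : ℝ => t * (1 + t ^ p) ^ (-1 / p))
          ((1 + Z s ^ p) ^ (-1 / p - 1)) (Z s) := by
        have hc0 : (0:ℝ) ≤ Z s := (hZmem s hsIcc).1
        have h1 : HasDerivAt (fun t : ℝ => 1 + t ^ p) (p * Z s ^ (p - 1)) (Z s) := by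
          simpa using (Real.hasDerivAt_rpow_const (x := Z s) (p := p) (Or.inr hp1.le)).const_add 1
        have h2 : HasDerivAt (fun t : ℝ => (1 + t ^ p) ^ (-1 / p))
            (-(Z s ^ (p - 1) * (1 + Z s ^ p) ^ (-1 / p - 1))) (Z s) := by
          have h := h1.rpow_const (p := -1 / p) (Or.inl hY.ne')
          convert h using 1
          field_simp
        have h3 : HasDerivAt (fun t : ℝ => t * (1 + t ^ p) ^ (-1 / p))
            (1 * (1 + Z s ^ p) ^ (-1 / p) + Z s * -(Z s ^ (p - 1) * (1 + Z s ^ p) ^ (-1 / p - 1))) (Z s) :=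
          (hasDerivAt_id' (x := Z s)).mul h2
        convert h3 using 1
        have hcp : Z s * Z s ^ (p - 1) = Z s ^ p := by
          have he : Z s ^ p = Z s ^ (1 + (p - 1)) := by norm_num
          rw [he, Real.rpow_add' hc0 (by intro h; apply hp0.ne'; linarith), Real.rpow_one]
        have hYsplit : (1 + Z s ^ p) ^ (-1 / p) = (1 + Z s ^ p) ^ (-1 / p - 1) * (1 + Z s ^ p) := by
          nth_rewrite 1 [show (-1 / p : ℝ) = (-1 / p - 1) + 1 from by ring]
          rw [Real.rpow_add hY, Real.rpow_one]
        rw [one_mul, hYsplit, show Z s * -(Z s ^ (p - 1) * (1 + Z s ^ p) ^ (-1 / p - 1))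
          = -((Z s * Z s ^ (p - 1)) * (1 + Z s ^ p) ^ (-1 / p - 1)) from by ring, hcp]
        ring
      have hchain := hΦ.comp s (hZderiv s hs)
      have heq2 : (1 + Z s ^ p) ^ (-1 / p - 1) * ((1 + Z s ^ p) ^ (1 / p : ℝ) * F s)
          = F s * (1 + Z s ^ p)⁻¹ := by
        rw [← mul_assoc, ← Real.rpow_add hY,
          show (-1 / p - 1) + 1 / p = (-1 : ℝ) from by ring, Real.rpow_neg_one]
        ring
      have : HasDerivAt (fun s' : ℝ => Z s' * (1 + Z s' ^ p) ^ (-1 / p))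
          (F s * (1 + Z s ^ p)⁻¹) s := by
        rw [← heq2]
        simpa [Function.comp_def] using hchain
      exact this.hasDerivWithinAt
    · apply ContinuousOn.intervalIntegrable
      rw [Set.uIcc_of_le hy0.le]
      exact hFcy.mul hYinvc
  -- assembling the inequality
  clear_value Z V A B
  set T : ℝ := y * (1 - y ^ p) ^ (-1 / p) with hTdef
  set Hh : ℝ := z * (1 + z ^ p) ^ (-1 / p) with hHdef
  have hyp1 : 0 < 1 - y ^ p := hone_sub y ⟨hy0.le, le_rfl⟩
  have hzp1 : 0 < 1 + z ^ p := one_add_pos' hp0 (by linarith)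
  have hT0 : 0 < T := mul_pos hy0 (Real.rpow_pos_of_pos hyp1 _)
  have hH0 : 0 < Hh := mul_pos hz (Real.rpow_pos_of_pos hzp1 _)
  set α : ℝ := Real.sqrt (Hh / T) with hαdef
  have hα0 : 0 < α := Real.sqrt_pos.2 (div_pos hH0 hT0)
  have hptw : ∀ s ∈ Set.Ioc (0:ℝ) y,
      F s < α / 2 * (F s * (1 - s ^ p)⁻¹) + (2 * α)⁻¹ * (F s * (1 + Z s ^ p)⁻¹) := by
    intro s hs
    have hsIcc : s ∈ Set.Icc (0:ℝ) y := ⟨hs.1.le, hs.2⟩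
    have hFs : 0 < F s := hFpos s (hIccIoo hsIcc)
    have hXs : 0 < 1 - s ^ p := hone_sub s hsIcc
    have hYs : 0 < 1 + Z s ^ p := hZppos s hsIcc
    have ha0 : 0 < F s * (1 - s ^ p)⁻¹ := mul_pos hFs (inv_pos.2 hXs)
    have hb0 : 0 < F s * (1 + Z s ^ p)⁻¹ := mul_pos hFs (inv_pos.2 hYs)
    have hk := hkey s hs
    have hD0 : 0 < (1 - s ^ p) * (1 + Z s ^ p) := mul_pos hXs hYs
    have hab : F s ^ 2 < (F s * (1 - s ^ p)⁻¹) * (F s * (1 + Z s ^ p)⁻¹) := by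
      have hab' : (F s * (1 - s ^ p)⁻¹) * (F s * (1 + Z s ^ p)⁻¹)
          = F s ^ 2 / ((1 - s ^ p) * (1 + Z s ^ p)) := by
        field_simp
      rw [hab', lt_div_iff₀ hD0]
      have := mul_lt_of_lt_one_right (by positivity : (0:ℝ) < F s ^ 2) hk
      linarith
    exact amgm_aux hFs ha0 hb0 hα0 hab
  have hRHScont : ContinuousOn
      (fun s : ℝ => α / 2 * (F s * (1 - s ^ p)⁻¹) + (2 * α)⁻¹ * (F s * (1 + Z s ^ p)⁻¹))
      (Set.Icc 0 y) :=
    (continuousOn_const.mul (hFcy.mul hXinvc)).add (continuousOn_const.mul (hFcy.mul hYinvc))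
  have hint1 : IntervalIntegrable (fun s : ℝ => F s * (1 - s ^ p)⁻¹) MeasureTheory.volume 0 y := by
    apply ContinuousOn.intervalIntegrable
    rw [Set.uIcc_of_le hy0.le]
    exact hFcy.mul hXinvc
  have hint2 : IntervalIntegrable (fun s : ℝ => F s * (1 + Z s ^ p)⁻¹) MeasureTheory.volume 0 y := by
    apply ContinuousOn.intervalIntegrable
    rw [Set.uIcc_of_le hy0.le]
    exact hFcy.mul hYinvc
  have hxeq : x = ∫ s in (0:ℝ)..y, F s := by rw [← hxy]; simp [arcsinp, hFdef]
  have hxlt : x < α / 2 * T + (2 * α)⁻¹ * Hh := by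
    calc x = ∫ s in (0:ℝ)..y, F s := hxeq
      _ < ∫ s in (0:ℝ)..y,
          (α / 2 * (F s * (1 - s ^ p)⁻¹) + (2 * α)⁻¹ * (F s * (1 + Z s ^ p)⁻¹)) := by
          apply intervalIntegral.integral_lt_integral_of_continuousOn_of_le_of_exists_lt hy0
            hFcy hRHScont (fun s hs => (hptw s hs).le)
            ⟨y, ⟨hy0.le, le_rfl⟩, hptw y ⟨hy0, le_rfl⟩⟩
      _ = α / 2 * T + (2 * α)⁻¹ * Hh := by
          rw [intervalIntegral.integral_add (hint1.const_mul _) (hint2.const_mul _),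
            intervalIntegral.integral_const_mul, intervalIntegral.integral_const_mul, hT, hH]
  have hsq : x ^ 2 < T * Hh := by
    have hαT : α * T = Real.sqrt (T * Hh) := by
      rw [hαdef, show T * Hh = (Hh / T) * T ^ 2 from by field_simp,
        Real.sqrt_mul (div_pos hH0 hT0).le, Real.sqrt_sq hT0.le]
    have hαH : α * Real.sqrt (T * Hh) = Hh := by
      rw [hαdef, ← Real.sqrt_mul (div_pos hH0 hT0).le,
        show Hh / T * (T * Hh) = Hh ^ 2 from by field_simp, Real.sqrt_sq hH0.le]
    have hβeq : α / 2 * T + (2 * α)⁻¹ * Hh = Real.sqrt (T * Hh) := by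
      have h1 : α / 2 * T = Real.sqrt (T * Hh) / 2 := by rw [← hαT]; ring
      have hcalc : ∀ β : ℝ, (2 * α)⁻¹ * (α * β) = β / 2 := by
        intro β
        rw [mul_inv, show (2:ℝ)⁻¹ * α⁻¹ * (α * β) = (α⁻¹ * α) * (2⁻¹ * β) from by ring,
          inv_mul_cancel₀ hα0.ne', one_mul]
        ring
      have h2 : (2 * α)⁻¹ * Hh = Real.sqrt (T * Hh) / 2 := by
        conv_lhs => rw [← hαH]
        rw [hcalc]
      rw [h1, h2]; ring
    rw [hβeq] at hxlt
    exact (Real.lt_sqrt hx0.le).1 hxlt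
  -- the final algebra
  have hP : (0:ℝ) < (1 - y ^ p) ^ (1 / p) := Real.rpow_pos_of_pos hyp1 _
  have hQ : (0:ℝ) < (1 + z ^ p) ^ (1 / p) := Real.rpow_pos_of_pos hzp1 _
  have hTP : T * (1 - y ^ p) ^ (1 / p) = y := by
    rw [hTdef, show (-1 / p : ℝ) = -(1 / p) from by ring, Real.rpow_neg hyp1.le]
    field_simp
  have hHQ : Hh * (1 + z ^ p) ^ (1 / p) = z := by
    rw [hHdef, show (-1 / p : ℝ) = -(1 / p) from by ring, Real.rpow_neg hzp1.le]
    field_simp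
  rw [div_lt_div_iff₀ hy0 (mul_pos hx0 hQ)]
  have hfin := mul_lt_mul_of_pos_right hsq (mul_pos hP hQ)
  calc x * (1 - y ^ p) ^ (1 / p) * (x * (1 + z ^ p) ^ (1 / p))
      = x ^ 2 * ((1 - y ^ p) ^ (1 / p) * (1 + z ^ p) ^ (1 / p)) := by ring
    _ < T * Hh * ((1 - y ^ p) ^ (1 / p) * (1 + z ^ p) ^ (1 / p)) := hfin
    _ = (T * (1 - y ^ p) ^ (1 / p)) * (Hh * (1 + z ^ p) ^ (1 / p)) := by ring
    _ = z * y := by rw [hTP, hHQ]; ring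
end
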